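/- arXiv:2605.05849 — 10 statements merged into one kernel-verified Lean document; each statement's English description precedes it below -/
import Mathlib

section
/- Let F be a field of characteristic 2 and let B_4(F) be the space of 4×4 matrices of the block form [A S2; S1 A^T] with A ∈ Mat_2(F) and S1, S2 symmetric 2×2 matrices. Then B_4(F) is a linear subspace of Mat_4(F) of dimension 10, and every element of B_4(F) has at most 2 distinct eigenvalues in the algebraic closure of F. -/
open Matrix in
/-- The space B₄(F) of block matrices [A S₂; S₁ Aᵀ] with A ∈ Mat₂(F) and S₁, S₂
symmetric (over a field of characteristic 2, where -Aᵀ = Aᵀ). -/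
def B4 (F : Type*) [Field F] : Submodule F (Matrix (Fin 2 ⊕ Fin 2) (Fin 2 ⊕ Fin 2) F) where
  carrier := {M | (∀ i j, M (Sum.inr i) (Sum.inr j) = M (Sum.inl j) (Sum.inl i)) ∧
    (∀ i j, M (Sum.inl i) (Sum.inr j) = M (Sum.inl j) (Sum.inr i)) ∧
    (∀ i j, M (Sum.inr i) (Sum.inl j) = M (Sum.inr j) (Sum.inl i))}
  add_mem' := by
    rintro a b ⟨h1, h2, h3⟩ ⟨g1, g2, g3⟩
    refine ⟨fun i j => ?_, fun i j => ?_, fun i j => ?_⟩ <;>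
      simp [Matrix.add_apply, h1 i j, h2 i j, h3 i j, g1 i j, g2 i j, g3 i j]
  zero_mem' := ⟨fun i j => rfl, fun i j => rfl, fun i j => rfl⟩
  smul_mem' := by
    rintro c a ⟨h1, h2, h3⟩
    refine ⟨fun i j => ?_, fun i j => ?_, fun i j => ?_⟩ <;>
      simp [Matrix.smul_apply, h1 i j, h2 i j, h3 i j]


section Dim
variable (F : Type*) [Field F]

/-- builds the element of B4 from its 10 coordinates -/
def b4mk (v : Fin 10 → F) : Matrix (Fin 2 ⊕ Fin 2) (Fin 2 ⊕ Fin 2) F :=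
  fun p q => match p, q with
  | .inl i, .inl j => !![v 0, v 1; v 2, v 3] i j
  | .inl i, .inr j => !![v 4, v 5; v 5, v 6] i j
  | .inr i, .inl j => !![v 7, v 8; v 8, v 9] i j
  | .inr i, .inr j => !![v 0, v 2; v 1, v 3] i j

lemma b4mk_mem (v : Fin 10 → F) : b4mk F v ∈ B4 F := by
  refine ⟨fun i j => ?_, fun i j => ?_, fun i j => ?_⟩ <;>
    fin_cases i <;> fin_cases j <;> rfl

def b4equiv : B4 F ≃ₗ[F] (Fin 10 → F) where
  toFun M := ![M.1 (.inl 0) (.inl 0), M.1 (.inl 0) (.inl 1), M.1 (.inl 1) (.inl 0),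
    M.1 (.inl 1) (.inl 1), M.1 (.inl 0) (.inr 0), M.1 (.inl 0) (.inr 1),
    M.1 (.inl 1) (.inr 1), M.1 (.inr 0) (.inl 0), M.1 (.inr 0) (.inl 1),
    M.1 (.inr 1) (.inl 1)]
  map_add' M N := by funext k; fin_cases k <;> rfl
  map_smul' c M := by funext k; fin_cases k <;> rfl
  invFun v := ⟨b4mk F v, b4mk_mem F v⟩
  left_inv := by
    rintro ⟨M, h1, h2, h3⟩
    ext p q
    rcases p with i | i <;> rcases q with j | j <;> fin_cases i <;> fin_cases j <;>
      (try rfl) <;> simp [b4mk, h1, h2, h3] <;> rfl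
  right_inv v := by funext k; fin_cases k <;> rfl

lemma finrank_B4 : Module.finrank F (B4 F) = 10 := by
  rw [LinearEquiv.finrank_eq (b4equiv F), Module.finrank_fin_fun]

end Dim

section Det
open Matrix Polynomial

variable {F : Type*} [Field F]

theorem my_det_fin_four {R : Type*} [CommRing R] (A : Matrix (Fin 4) (Fin 4) R) :
    A.det =
      A 0 0 * A 1 1 * A 2 2 * A 3 3 - A 0 0 * A 1 1 * A 2 3 * A 3 2
      - A 0 0 * A 1 2 * A 2 1 * A 3 3 + A 0 0 * A 1 2 * A 2 3 * A 3 1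
      + A 0 0 * A 1 3 * A 2 1 * A 3 2 - A 0 0 * A 1 3 * A 2 2 * A 3 1
      - A 0 1 * A 1 0 * A 2 2 * A 3 3 + A 0 1 * A 1 0 * A 2 3 * A 3 2
      + A 0 1 * A 1 2 * A 2 0 * A 3 3 - A 0 1 * A 1 2 * A 2 3 * A 3 0
      - A 0 1 * A 1 3 * A 2 0 * A 3 2 + A 0 1 * A 1 3 * A 2 2 * A 3 0
      + A 0 2 * A 1 0 * A 2 1 * A 3 3 - A 0 2 * A 1 0 * A 2 3 * A 3 1
      - A 0 2 * A 1 1 * A 2 0 * A 3 3 + A 0 2 * A 1 1 * A 2 3 * A 3 0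
      + A 0 2 * A 1 3 * A 2 0 * A 3 1 - A 0 2 * A 1 3 * A 2 1 * A 3 0
      - A 0 3 * A 1 0 * A 2 1 * A 3 2 + A 0 3 * A 1 0 * A 2 2 * A 3 1
      + A 0 3 * A 1 1 * A 2 0 * A 3 2 - A 0 3 * A 1 1 * A 2 2 * A 3 0
      - A 0 3 * A 1 2 * A 2 0 * A 3 1 + A 0 3 * A 1 2 * A 2 1 * A 3 0 := by
  rw [Matrix.det_succ_row_zero]
  have sa00 : Fin.succAbove (0:Fin 4) (0:Fin 3) = 1 := by decide
  have sa01 : Fin.succAbove (0:Fin 4) (1:Fin 3) = 2 := by decide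
  have sa02 : Fin.succAbove (0:Fin 4) (2:Fin 3) = 3 := by decide
  have sa10 : Fin.succAbove (1:Fin 4) (0:Fin 3) = 0 := by decide
  have sa11 : Fin.succAbove (1:Fin 4) (1:Fin 3) = 2 := by decide
  have sa12 : Fin.succAbove (1:Fin 4) (2:Fin 3) = 3 := by decide
  have sa20 : Fin.succAbove (2:Fin 4) (0:Fin 3) = 0 := by decide
  have sa21 : Fin.succAbove (2:Fin 4) (1:Fin 3) = 1 := by decide
  have sa22 : Fin.succAbove (2:Fin 4) (2:Fin 3) = 3 := by decide
  have sa30 : Fin.succAbove (3:Fin 4) (0:Fin 3) = 0 := by decide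
  have sa31 : Fin.succAbove (3:Fin 4) (1:Fin 3) = 1 := by decide
  have sa32 : Fin.succAbove (3:Fin 4) (2:Fin 3) = 2 := by decide
  have sc2 : Fin.succ (2:Fin 3) = 3 := by decide
  simp only [Fin.sum_univ_succ, Fin.sum_univ_zero, Matrix.det_fin_three,
    Matrix.submatrix_apply, Fin.succ_zero_eq_one, Fin.succ_one_eq_two, sc2,
    sa00, sa01, sa02, sa10, sa11, sa12, sa20, sa21, sa22, sa30, sa31, sa32,
    Fin.val_zero, Fin.val_one, Fin.val_succ, Fin.val_two]
  norm_num
  ring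

set_option maxHeartbeats 1000000 in
lemma det4_char2 [CharP F 2] (a b c d e f g h i j : F) :
    (!![X - C a, -C b, -C e, -C f;
        -C c, X - C d, -C f, -C g;
        -C h, -C i, X - C a, -C c;
        -C i, -C j, -C b, X - C d] : Matrix (Fin 4) (Fin 4) F[X]).det
    = X ^ 4 + C (a * a + d * d + e * h + g * j) * X ^ 2
        + C (f * f * i * i + f * f * h * j + e * g * i * i + e * g * h * j + d * d * e * h
            + c * c * e * j + b * b * g * h + b * b * c * c + a * a * g * j + a * a * d * d) := by
  have h2 : (2 : F[X]) = 0 := by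
    have h0 : (2 : F) = 0 := by exact_mod_cast CharP.cast_eq_zero F 2
    rw [← map_ofNat (C : F →+* F[X]) 2, h0, map_zero]
  rw [my_det_fin_four]
  simp only [Matrix.cons_val', Matrix.cons_val_zero, Matrix.cons_val_one, Matrix.head_cons,
    Matrix.empty_val', Matrix.cons_val_fin_one, Matrix.head_fin_const, Matrix.of_apply,
    Matrix.cons_val_two, Matrix.cons_val_three, Matrix.tail_cons, map_add, _root_.map_mul]
  linear_combination
    ((- C d - C a) * X ^ 3
      + (- C g * C j - C f * C i - C e * C h - C b * C c + 2 * C a * C d) * X ^ 2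
      + (C d * C f * C i + C d * C e * C h - C c * C f * C j - C c * C e * C i
         - C b * C g * C i - C b * C f * C h + C b * C c * C d + C a * C g * C j
         + C a * C f * C i - C a * C d * C d + C a * C b * C c - C a * C a * C d) * X
      + (- C f * C f * C h * C j - C e * C g * C i * C i - C d * C d * C e * C h
         + C c * C d * C e * C i - C c * C c * C e * C j + C b * C d * C f * C h
         - C b * C c * C f * C i - C b * C b * C g * C h - C a * C d * C f * C i
         + C a * C c * C f * C j + C a * C b * C g * C i - C a * C b * C c * C d
         - C a * C a * C g * C j)) * h2

end Det

section Charpoly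
open Matrix Polynomial
variable {F : Type*} [Field F]

lemma charpoly_B4 [CharP F 2] {M : Matrix (Fin 2 ⊕ Fin 2) (Fin 2 ⊕ Fin 2) F}
    (hM : M ∈ B4 F) : ∃ α β : F, M.charpoly = X ^ 4 + C α * X ^ 2 + C β := by
  obtain ⟨h1, h2, h3⟩ := hM
  set a := M (.inl 0) (.inl 0) with ha
  set b := M (.inl 0) (.inl 1) with hb
  set c := M (.inl 1) (.inl 0) with hc
  set d := M (.inl 1) (.inl 1) with hd
  set e := M (.inl 0) (.inr 0) with he
  set f := M (.inl 0) (.inr 1) with hf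
  set g := M (.inl 1) (.inr 1) with hg
  set h := M (.inr 0) (.inl 0) with hh
  set i := M (.inr 0) (.inl 1) with hi
  set j := M (.inr 1) (.inl 1) with hj
  refine ⟨a * a + d * d + e * h + g * j,
    f * f * i * i + f * f * h * j + e * g * i * i + e * g * h * j + d * d * e * h
      + c * c * e * j + b * b * g * h + b * b * c * c + a * a * g * j + a * a * d * d, ?_⟩
  rw [← Matrix.charpoly_reindex finSumFinEquiv M]
  have hN : (Matrix.reindex finSumFinEquiv finSumFinEquiv M) =
      !![a, b, e, f; c, d, f, g; h, i, a, c; i, j, b, d] := by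
    ext p q
    fin_cases p <;> fin_cases q <;>
      simp [ha, hb, hc, hd, he, hf, hg, hh, hi, hj,
        Matrix.reindex_apply, Matrix.submatrix_apply, h1, h2, h3,
        show ∀ k : Fin 4, (finSumFinEquiv (m := 2) (n := 2)).symm k =
          ![Sum.inl 0, Sum.inl 1, Sum.inr 0, Sum.inr 1] k from by decide]
  rw [hN, Matrix.charpoly]
  have hcm : charmatrix !![a, b, e, f; c, d, f, g; h, i, a, c; i, j, b, d] =
      !![X - C a, -C b, -C e, -C f;
         -C c, X - C d, -C f, -C g;
         -C h, -C i, X - C a, -C c;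
         -C i, -C j, -C b, X - C d] := by
    ext p q
    fin_cases p <;> fin_cases q <;>
      first
        | (rw [Matrix.charmatrix_apply_eq]; rfl)
        | (rw [Matrix.charmatrix_apply_ne _ _ _ (by decide)]; rfl)
  rw [hcm]
  exact det4_char2 a b c d e f g h i j

end Charpoly

open Matrix Polynomial in
/-- B₄(F) is a 10-dimensional linear subspace of Mat₄(F), and over a field of
characteristic 2 each of its elements has at most 2 distinct eigenvalues in the
algebraic closure of F. -/
theorem stmt2 {F : Type*} [Field F] (hchar : ringChar F = 2) :
    Module.finrank F (B4 F) = 10 ∧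
    ∀ M ∈ B4 F, ∃ a b : AlgebraicClosure F, ∀ c : AlgebraicClosure F,
      Polynomial.aeval c M.charpoly = 0 → c = a ∨ c = b := by
  haveI : CharP F 2 := hchar ▸ ringChar.charP F
  refine ⟨finrank_B4 F, fun M hM => ?_⟩
  set K := AlgebraicClosure F
  haveI : CharP K 2 := charP_of_injective_algebraMap (algebraMap F K).injective 2
  have h2K : (2 : K) = 0 := by exact_mod_cast CharP.cast_eq_zero K 2
  obtain ⟨α, β, hp⟩ := charpoly_B4 hM
  set A : K := algebraMap F K α
  set B : K := algebraMap F K β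
  -- r : root of the quadratic
  obtain ⟨r, hr⟩ := IsAlgClosed.exists_root (X ^ 2 + C A * X + C B)
    (by rw [show (X ^ 2 + C A * X + C B : K[X]).degree = 2 by compute_degree!]; decide)
  have hq : r ^ 2 + A * r + B = 0 := by simpa using hr
  obtain ⟨a, ha'⟩ := IsAlgClosed.exists_root (X ^ 2 - C r : K[X])
    (by rw [show (X ^ 2 - C r : K[X]).degree = 2 by compute_degree!]; decide)
  have ha : a ^ 2 = r := by
    have := ha'; simp only [IsRoot, eval_sub, eval_pow, eval_X, eval_C, sub_eq_zero] at this
    exact this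
  obtain ⟨b, hb'⟩ := IsAlgClosed.exists_root (X ^ 2 - C (-A - r) : K[X])
    (by rw [show (X ^ 2 - C (-A - r) : K[X]).degree = 2 by compute_degree!]; decide)
  have hb : b ^ 2 = -A - r := by
    have := hb'; simp only [IsRoot, eval_sub, eval_pow, eval_X, eval_C, sub_eq_zero] at this
    exact this
  refine ⟨a, b, fun c hc => ?_⟩
  have hc' : c ^ 4 + A * c ^ 2 + B = 0 := by
    rw [hp] at hc
    simpa [A, B] using hc
  have key : ((c - a) * (c - b)) ^ 2 = 0 := by
    linear_combination hc' + (c * c - 2 * b * c + b * b) * ha + (r + c * c - 2 * a * c) * hb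
      - hq + (-(b * c * r) - b * c ^ 3 + a * c * r - a * c ^ 3 + 2 * a * b * c ^ 2
        - A * c ^ 2 + A * a * c) * h2K
  have hprod : (c - a) * (c - b) = 0 := by
    exact pow_eq_zero_iff (two_ne_zero) |>.mp key
  rcases mul_eq_zero.mp hprod with h | h
  · exact Or.inl (sub_eq_zero.mp h)
  · exact Or.inr (sub_eq_zero.mp h)
end

section
/- Let F be a field with more than 2 elements, and let V be a 2-dimensional vector space over F. If S is a linear subspace of End(V) such that every element of S has at most one nonzero eigenvalue in F, then dim S ≤ 3. -/
/-- Over a field with more than 2 elements, any linear subspace of End(V) of a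
2-dimensional vector space V all of whose elements have at most one nonzero eigenvalue
in F has dimension at most 3. -/
theorem stmt3 {F V : Type*} [Field F] [AddCommGroup V] [Module F V]
    [FiniteDimensional F V] (hV : Module.finrank F V = 2)
    (hF : 2 < Cardinal.mk F)
    (S : Submodule F (V →ₗ[F] V))
    (hS : ∀ u ∈ S, {a : F | a ≠ 0 ∧ Module.End.HasEigenvalue u a}.Subsingleton) :
    Module.finrank F S ≤ 3 := by
  by_contra h
  push_neg at h
  have hEnd : Module.finrank F (V →ₗ[F] V) = 4 := by
    rw [Module.finrank_linearMap, hV]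
  have hle : Module.finrank F S ≤ 4 := hEnd ▸ Submodule.finrank_le S
  have h4 : Module.finrank F S = 4 := le_antisymm hle h
  have hTop : S = ⊤ := Submodule.eq_top_of_finrank_eq (by rw [h4, hEnd])
  obtain ⟨c, hc0, hc1⟩ : ∃ c : F, c ≠ 0 ∧ c ≠ 1 := by
    by_contra hc
    push_neg at hc
    have hsurj : Function.Surjective (fun i : ULift (Fin 2) => if i.down = 0 then (0 : F) else 1) := by
      intro x
      rcases eq_or_ne x 0 with rfl | hx
      · exact ⟨⟨0⟩, rfl⟩
      · exact ⟨⟨1⟩, by simpa using (hc x hx).symm⟩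
    have hle2 := Cardinal.mk_le_of_surjective hsurj
    simp [Cardinal.mk_fin] at hle2
    exact absurd (hF.trans_le hle2) (lt_irrefl _)
  let b := Module.finBasisOfFinrankEq F V hV
  let u := b.constr F ![b 0, c • b 1]
  have hu0 : u (b 0) = (1 : F) • b 0 := by
    simp [u, Module.Basis.constr_basis]
  have hu1 : u (b 1) = c • b 1 := by
    simp [u, Module.Basis.constr_basis]
  have hv0 : Module.End.HasEigenvalue u 1 :=
    Module.End.hasEigenvalue_of_hasEigenvector
      ⟨Module.End.mem_eigenspace_iff.2 hu0, b.ne_zero 0⟩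
  have hv1 : Module.End.HasEigenvalue u c :=
    Module.End.hasEigenvalue_of_hasEigenvector
      ⟨Module.End.mem_eigenspace_iff.2 hu1, b.ne_zero 1⟩
  have h1c : (1 : F) = c :=
    hS u (hTop ▸ Submodule.mem_top) ⟨one_ne_zero, hv0⟩ ⟨hc0, hv1⟩
  exact hc1 h1c.symm
end

section
/- Let F be a field of characteristic 2 with more than 2 elements, and let S be a 3-dimensional linear subspace of Mat_2(F) such that every element of S has at most one nonzero eigenvalue in F. Then S = sl_2(F). -/
/-!
Write `S = ker f` and fix `u ∉ {0, 1}`. If `f (single 0 1 1) ≠ 0`, then `S` contains a matrix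
`!![1, x; 0, u]`, whose eigenvalues `1` and `u` are distinct and nonzero; so
`f (single 0 1 1) = 0`, and by transposition `f (single 1 0 1) = 0`. If then
`a = f (single 0 0 1)` differed from `d = f (single 1 1 1)`, then `S` would contain
`!![d, 1; r, a]` for every `r`, and since `t = a + d ≠ 0`, some `r` makes its eigenvalues
`t * u` and `t * (u + 1)`, which in characteristic 2 sum to the trace `t` and are distinct and
nonzero. Hence `f` is a nonzero multiple of the trace.
-/

open Polynomial Matrix

theorem exists_ne_zero_ne_one_of_two_lt_mk {R : Type*} [Zero R] [One R]
    (h : 2 < Cardinal.mk R) : ∃ u : R, u ≠ 0 ∧ u ≠ 1 := by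
  by_contra! h01
  have hsurj : Function.Surjective fun i : ULift (Fin 2) => ![(0 : R), 1] i.down := fun u => by
    by_cases hu : u = 0
    · exact ⟨⟨0⟩, hu.symm⟩
    · exact ⟨⟨1⟩, (h01 u hu).symm⟩
  simpa using h.trans_le (Cardinal.mk_le_of_surjective hsurj)

theorem Submodule.exists_ker_eq_of_finrank_add_one {K V : Type*} [Field K] [AddCommGroup V]
    [Module K V] [FiniteDimensional K V] (S : Submodule K V)
    (h : Module.finrank K S + 1 = Module.finrank K V) :
    ∃ f : V →ₗ[K] K, LinearMap.ker f = S := by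
  have hq : Module.finrank K (V ⧸ S) = Module.finrank K K := by
    have := S.finrank_quotient_add_finrank
    rw [Module.finrank_self]
    omega
  exact ⟨(LinearEquiv.ofFinrankEq _ _ hq).toLinearMap ∘ₗ S.mkQ, by
    rw [LinearMap.ker_comp, LinearEquiv.ker, Submodule.comap_bot, Submodule.ker_mkQ]⟩

namespace Matrix

variable {F : Type*} [Field F]

theorem charpoly_fin_two_eq_of_trace_of_det {R : Type*} [CommRing R] [Nontrivial R]
    {M : Matrix (Fin 2) (Fin 2) R} {α β : R}
    (htr : M.trace = α + β) (hdet : M.det = α * β) :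
    M.charpoly = (X - C α) * (X - C β) := by
  rw [charpoly_fin_two, htr, hdet, C_add, C_mul]
  ring

theorem notMem_of_trace_of_det {S : Set (Matrix (Fin 2) (Fin 2) F)}
    (hS : ∀ M ∈ S, {a : F | a ≠ 0 ∧ M.charpoly.IsRoot a}.Subsingleton)
    {M : Matrix (Fin 2) (Fin 2) F} {α β : F} (hα : α ≠ 0) (hβ : β ≠ 0) (hαβ : α ≠ β)
    (htr : M.trace = α + β) (hdet : M.det = α * β) : M ∉ S := by
  intro hM
  have hcp := charpoly_fin_two_eq_of_trace_of_det htr hdet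
  exact hαβ <| hS M hM ⟨hα, by simp [hcp]⟩ ⟨hβ, by simp [hcp]⟩

theorem linearMap_apply_of_fin_two {R : Type*} [CommSemiring R]
    (f : Matrix (Fin 2) (Fin 2) R →ₗ[R] R) (p q r s : R) :
    f !![p, q; r, s] = p * f (single 0 0 1) + q * f (single 0 1 1)
      + r * f (single 1 0 1) + s * f (single 1 1 1) := by
  set M := !![p, q; r, s]
  have hsingle (i j : Fin 2) : single i j (M i j) = M i j • single i j 1 := by
    rw [smul_single, smul_eq_mul, mul_one]
  rw [matrix_eq_sum_single M]
  simp only [Fin.sum_univ_two, hsingle, map_add, map_smul, smul_eq_mul, ← add_assoc]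
  rfl

section SpectralHyperplane

variable {f : Matrix (Fin 2) (Fin 2) F →ₗ[F] F}

theorem apply_single_zero_one_eq_zero
    (hf : ∀ M ∈ LinearMap.ker f, {a : F | a ≠ 0 ∧ M.charpoly.IsRoot a}.Subsingleton)
    {u : F} (hu0 : u ≠ 0) (hu1 : u ≠ 1) : f (single 0 1 1) = 0 := by
  set b := f (single 0 1 1)
  by_contra hb
  refine notMem_of_trace_of_det hf one_ne_zero hu0 hu1.symm
    (M := !![1, -(f (single 0 0 1) + u * f (single 1 1 1)) / b; 0, u])
    (trace_fin_two_of ..) (by rw [det_fin_two_of]; ring) ?_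
  rw [SetLike.mem_coe, LinearMap.mem_ker, linearMap_apply_of_fin_two]
  field_simp
  ring

theorem apply_single_one_zero_eq_zero
    (hf : ∀ M ∈ LinearMap.ker f, {a : F | a ≠ 0 ∧ M.charpoly.IsRoot a}.Subsingleton)
    {u : F} (hu0 : u ≠ 0) (hu1 : u ≠ 1) : f (single 1 0 1) = 0 := by
  have hfT : ∀ M ∈ LinearMap.ker (f ∘ₗ (transposeLinearEquiv _ _ F F).toLinearMap),
      {a : F | a ≠ 0 ∧ M.charpoly.IsRoot a}.Subsingleton := fun M hM => by
    simpa [charpoly_transpose] using hf Mᵀ hM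
  simpa [transpose_single] using apply_single_zero_one_eq_zero hfT hu0 hu1

theorem apply_single_zero_zero_eq_apply_single_one_one [CharP F 2]
    (hf : ∀ M ∈ LinearMap.ker f, {a : F | a ≠ 0 ∧ M.charpoly.IsRoot a}.Subsingleton)
    {u : F} (hu0 : u ≠ 0) (hu1 : u ≠ 1) : f (single 0 0 1) = f (single 1 1 1) := by
  set a := f (single 0 0 1)
  set d := f (single 1 1 1)
  by_contra had
  have ht : a + d ≠ 0 := fun h => had (CharTwo.add_eq_zero.mp h)
  have hu : u + 1 ≠ 0 := fun h => hu1 (CharTwo.add_eq_zero.mp h)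
  refine notMem_of_trace_of_det hf (mul_ne_zero ht hu0) (mul_ne_zero ht hu)
    (fun h => ht (by linear_combination -h)) (M := !![d, 1; a * d - (a + d) ^ 2 * u * (u + 1), a])
    (by rw [trace_fin_two_of]; linear_combination -(a + d) * u * CharTwo.two_eq_zero (R := F))
    (by rw [det_fin_two_of]; ring) ?_
  rw [SetLike.mem_coe, LinearMap.mem_ker, linearMap_apply_of_fin_two,
    apply_single_zero_one_eq_zero hf hu0 hu1, apply_single_one_zero_eq_zero hf hu0 hu1]
  linear_combination a * d * CharTwo.two_eq_zero (R := F)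

theorem eq_smul_traceLinearMap [CharP F 2]
    (hf : ∀ M ∈ LinearMap.ker f, {a : F | a ≠ 0 ∧ M.charpoly.IsRoot a}.Subsingleton)
    {u : F} (hu0 : u ≠ 0) (hu1 : u ≠ 1) :
    f = f (single 0 0 1) • traceLinearMap (Fin 2) F F := by
  ext M
  rw [LinearMap.smul_apply, traceLinearMap_apply, eta_fin_two M, trace_fin_two_of,
    linearMap_apply_of_fin_two, apply_single_zero_one_eq_zero hf hu0 hu1,
    apply_single_one_zero_eq_zero hf hu0 hu1,
    ← apply_single_zero_zero_eq_apply_single_one_one hf hu0 hu1, smul_eq_mul]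
  ring

end SpectralHyperplane

end Matrix

open Matrix in
/-- Over a field of characteristic 2 with more than 2 elements, a 3-dimensional linear
subspace of Mat₂(F) all of whose elements have at most one nonzero eigenvalue in F must
equal sl₂(F), the space of trace-zero matrices. -/
theorem stmt4 {F : Type*} [Field F] (hchar : ringChar F = 2) (hF : 2 < Cardinal.mk F)
    (S : Submodule F (Matrix (Fin 2) (Fin 2) F))
    (hdim : Module.finrank F S = 3)
    (hS : ∀ M ∈ S, {a : F | a ≠ 0 ∧ M.charpoly.IsRoot a}.Subsingleton) :
    S = LinearMap.ker (Matrix.traceLinearMap (Fin 2) F F) := by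
  have := ringChar.of_eq hchar
  obtain ⟨u, hu0, hu1⟩ := exists_ne_zero_ne_one_of_two_lt_mk hF
  obtain ⟨f, rfl⟩ := S.exists_ker_eq_of_finrank_add_one (by simp [hdim, Module.finrank_matrix])
  have hf := eq_smul_traceLinearMap hS hu0 hu1
  set a := f (single 0 0 1)
  have ha : a ≠ 0 := by
    intro ha
    rw [hf, ha, zero_smul, LinearMap.ker_zero, finrank_top] at hdim
    simp [Module.finrank_matrix] at hdim
  rw [hf, LinearMap.ker_smul _ _ ha]
end

section
/- Let F be a field, n ≥ 3, and let M be a linear subspace of Mat_n(F) containing all matrices with zero diagonal. If F has at least 3 elements, then M contains a matrix with at least 3 distinct eigenvalues in F; in particular M is not 2-spec. -/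
/-!
Pick distinct `a, b, c ∈ F` with `a + b + c = 0` (`1, -1, 0`, or `1, t, 1 + t` in
characteristic 2). Since the `t ^ 2` coefficient of `(t - a) (t - b) (t - c)` vanishes, its
companion matrix has zero diagonal; placed in a `3 × 3` block of an `n × n` zero matrix it lies
in `S` and has the three eigenvalues `a, b, c`.
-/

open Matrix

theorem Matrix.isRoot_charpoly_of_mulVec_eq_smul {ι R : Type*} [Fintype ι] [DecidableEq ι]
    [CommRing R] [IsDomain R] {A : Matrix ι ι R} {μ : R} {v : ι → R} (hv : v ≠ 0)
    (h : A *ᵥ v = μ • v) : A.charpoly.IsRoot μ := by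
  rw [← charpoly_toLin', ← Module.End.hasEigenvalue_iff_isRoot_charpoly]
  exact Module.End.hasEigenvalue_of_hasEigenvector
    ⟨Module.End.mem_eigenspace_iff.mpr (by simpa using h), hv⟩

theorem exists_three_ne_add_eq_zero {F : Type*} [Field F] (hF : 3 ≤ Cardinal.mk F) :
    ∃ a b c : F, a ≠ b ∧ a ≠ c ∧ b ≠ c ∧ a + b + c = 0 := by
  by_cases h2 : (2 : F) = 0
  · obtain ⟨t, ht⟩ := Cardinal.exists_notMem_of_length_lt [0, 1]
      (lt_of_lt_of_le (by norm_num) hF)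
    simp only [List.mem_cons, List.not_mem_nil, not_or] at ht
    obtain ⟨ht0, ht1, -⟩ := ht
    refine ⟨1, t, 1 + t, Ne.symm ht1, ?_, ?_, by linear_combination (1 + t) * h2⟩
    · intro h; exact ht0 (by linear_combination -h)
    · intro h; exact one_ne_zero (by linear_combination -h)
  · refine ⟨1, -1, 0, fun h => h2 (by linear_combination h), one_ne_zero, ?_, by ring⟩
    exact neg_ne_zero.mpr one_ne_zero

namespace Matrix

variable {ι R : Type*} [DecidableEq ι] [CommRing R]

/-- The companion matrix of `t ^ 3 - y * t - x`, transposed and placed on the coordinates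
`i, j, k`. -/
def cubicCompanion (i j k : ι) (x y : R) : Matrix ι ι R :=
  single i j 1 + single j k 1 + single k i x + single k j y

variable {i j k : ι}

theorem diag_cubicCompanion (hij : i ≠ j) (hjk : j ≠ k) (hki : k ≠ i) (x y : R) :
    (cubicCompanion i j k x y).diag = 0 := by
  simp [cubicCompanion, diag_single_of_ne, hij, hjk, hki, hjk.symm]

theorem cubicCompanion_mulVec [Fintype ι] (hij : i ≠ j) (hjk : j ≠ k) (hki : k ≠ i) {x y μ : R}
    (hμ : μ ^ 3 = y * μ + x) :
    cubicCompanion i j k x y *ᵥ (Pi.single i 1 + μ • Pi.single j 1 + μ ^ 2 • Pi.single k 1) =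
      μ • (Pi.single i 1 + μ • Pi.single j 1 + μ ^ 2 • Pi.single k 1) := by
  simp only [cubicCompanion, add_mulVec, single_mulVec_eq, Pi.add_apply, Pi.smul_apply,
    Pi.single_eq_same, ne_eq, hij, hjk, hki, hij.symm, hjk.symm, hki.symm, not_false_eq_true,
    Pi.single_eq_of_ne, smul_eq_mul, mul_one, one_mul, mul_zero, zero_add, add_zero, smul_add]
  linear_combination (norm := module) -(hμ • Pi.single k (1 : R))

theorem isRoot_charpoly_cubicCompanion [Fintype ι] [IsDomain R] (hij : i ≠ j) (hjk : j ≠ k)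
    (hki : k ≠ i) {x y μ : R} (hμ : μ ^ 3 = y * μ + x) :
    (cubicCompanion i j k x y).charpoly.IsRoot μ := by
  refine isRoot_charpoly_of_mulVec_eq_smul (fun hv => ?_) (cubicCompanion_mulVec hij hjk hki hμ)
  simpa [hij.symm, hki] using congrFun hv i

end Matrix

/-- If n ≥ 3, |F| ≥ 3 and a linear subspace of Matₙ(F) contains all matrices with zero
diagonal, then it contains a matrix with at least 3 distinct eigenvalues in F; in
particular it is not 2-spec. -/
theorem stmt7 {F : Type*} [Field F] {n : ℕ} (hn : 3 ≤ n) (hF : 3 ≤ Cardinal.mk F)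
    (S : Submodule F (Matrix (Fin n) (Fin n) F))
    (hdiag : ∀ A : Matrix (Fin n) (Fin n) F, (∀ i, A i i = 0) → A ∈ S) :
    (∃ A ∈ S, ∃ a b c : F, a ≠ b ∧ a ≠ c ∧ b ≠ c ∧
      A.charpoly.IsRoot a ∧ A.charpoly.IsRoot b ∧ A.charpoly.IsRoot c) ∧
    ¬ (∀ A ∈ S, ∃ a b : F, ∀ c : F, A.charpoly.IsRoot c → c = a ∨ c = b) := by
  obtain ⟨a, b, c, hab, hac, hbc, hsum⟩ := exists_three_ne_add_eq_zero hF
  obtain ⟨i, j, k, hij, hjk, hki⟩ : ∃ i j k : Fin n, i ≠ j ∧ j ≠ k ∧ k ≠ i :=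
    ⟨⟨0, by omega⟩, ⟨1, by omega⟩, ⟨2, by omega⟩, by simp, by simp, by simp⟩
  -- `t ^ 3 - y * t - x = (t - a) * (t - b) * (t - c)` because `a + b + c = 0`
  set A := cubicCompanion i j k (a * b * c) (-(a * b + a * c + b * c))
  have hAS : A ∈ S := hdiag A (congrFun (diag_cubicCompanion hij hjk hki _ _))
  have hroot : ∀ μ, (μ - a) * (μ - b) * (μ - c) = 0 → A.charpoly.IsRoot μ := fun μ hμ =>
    isRoot_charpoly_cubicCompanion hij hjk hki (by linear_combination hμ + μ ^ 2 * hsum)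
  have ha := hroot a (by ring)
  have hb := hroot b (by ring)
  have hc := hroot c (by ring)
  refine ⟨⟨A, hAS, a, b, c, hab, hac, hbc, ha, hb, hc⟩, fun h2spec => ?_⟩
  obtain ⟨p, q, hpq⟩ := h2spec A hAS
  rcases hpq a ha with rfl | rfl <;> rcases hpq b hb with rfl | rfl <;>
    rcases hpq c hc with rfl | rfl <;> contradiction
end

section
/- Let F be a field, V an n-dimensional F-vector space, and r a positive integer with |F| > r. Let (V_i)_{i∈I} be a family of linear subspaces of V such that |I| = (n-1)r + 1, exactly r of the subspaces have dimension k for each k ∈ {1,...,n-2}, and exactly r+1 of the subspaces have dimension n-1. Then the union of the V_i does not equal V. -/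
/-- Covering Lemma: with |F| > r, a family of (n-1)r+1 subspaces of an n-dimensional
space V containing exactly r subspaces of each dimension k ∈ {1,…,n-2} and exactly r+1
hyperplanes (dimension n-1) cannot cover V. -/
theorem stmt8 {F V : Type*} [Field F] [AddCommGroup V] [Module F V]
    [FiniteDimensional F V] {n r : ℕ} (hr : 0 < r)
    (hV : Module.finrank F V = n) (hF : (r : Cardinal) < Cardinal.mk F)
    {I : Type*} [Fintype I] (W : I → Submodule F V) [∀ i k, Decidable (Module.finrank F (W i) = k)]
    (hcard : Fintype.card I = (n - 1) * r + 1)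
    (hdim : ∀ k : ℕ, 1 ≤ k → k ≤ n - 2 →
      Fintype.card {i // Module.finrank F (W i) = k} = r)
    (hhyp : Fintype.card {i // Module.finrank F (W i) = n - 1} = r + 1) :
    ∃ v : V, ∀ i, v ∉ W i := by
  classical
  -- first, n ≥ 2
  have hn2 : 2 ≤ n := by
    by_contra hn
    push_neg at hn
    have h0 : n - 1 = 0 := by omega
    have h1 : Fintype.card {i // Module.finrank F (W i) = n - 1} ≤ Fintype.card I :=
      Fintype.card_subtype_le _
    rw [hhyp, hcard, h0, zero_mul] at h1
    omega
  obtain ⟨m, rfl⟩ : ∃ m, n = m + 2 := ⟨n - 2, by omega⟩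
  have e1 : m + 2 - 1 = m + 1 := rfl
  have e2 : m + 2 - 2 = m := rfl
  rw [e1] at hcard hhyp
  -- filter versions of the counting hypotheses
  have hdim' : ∀ k, 1 ≤ k → k ≤ m →
      ((Finset.univ : Finset I).filter (fun i => Module.finrank F (W i) = k)).card = r := by
    intro k h1 h2
    rw [← hdim k h1 (by omega), Fintype.card_subtype]
  have hhyp' : ((Finset.univ : Finset I).filter
      (fun i => Module.finrank F (W i) = m + 1)).card = r + 1 := by
    rw [← hhyp, Fintype.card_subtype]
  -- every subspace has dimension in [1, m+1]
  have hBU : (Finset.Icc 1 (m + 1)).biUnion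
      (fun k => (Finset.univ : Finset I).filter (fun i => Module.finrank F (W i) = k))
      = Finset.univ := by
    apply Finset.eq_univ_of_card
    rw [Finset.card_biUnion]
    · rw [Finset.sum_Icc_succ_top (by omega : 1 ≤ m + 1), hhyp',
        Finset.sum_congr rfl
          (fun k hk => hdim' k (Finset.mem_Icc.mp hk).1 (Finset.mem_Icc.mp hk).2),
        Finset.sum_const, smul_eq_mul, Nat.card_Icc, hcard]
      simp only [Nat.add_sub_cancel]
      ring
    · intro k _ k' _ hkk'
      simp only [Finset.disjoint_left, Finset.mem_filter]
      rintro i ⟨-, h⟩ ⟨-, h'⟩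
      exact hkk' (h ▸ h')
  have hmem : ∀ i : I, 1 ≤ Module.finrank F (W i) ∧ Module.finrank F (W i) ≤ m + 1 := by
    intro i
    have : i ∈ (Finset.Icc 1 (m + 1)).biUnion
        (fun k => (Finset.univ : Finset I).filter (fun i => Module.finrank F (W i) = k)) := by
      rw [hBU]; exact Finset.mem_univ i
    obtain ⟨k, hk, hik⟩ := Finset.mem_biUnion.mp this
    obtain ⟨h1, h2⟩ := Finset.mem_Icc.mp hk
    have := (Finset.mem_filter.mp hik).2
    omega
  by_contra hcon
  push_neg at hcon
  -- hcon : ∀ v, ∃ i, v ∈ W i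
  cases finite_or_infinite F with
  | inr hinf =>
    have hcover : ⋃ i, ((W i : Submodule F V) : Set V) = Set.univ := by
      apply Set.eq_univ_of_forall
      intro v
      obtain ⟨i, hi⟩ := hcon v
      exact Set.mem_iUnion.mpr ⟨i, hi⟩
    obtain ⟨i, hi⟩ := Subspace.exists_eq_top_of_iUnion_eq_univ hcover
    have h1 : Module.finrank F (W i) = m + 2 := by
      rw [hi, finrank_top, hV]
    have := (hmem i).2
    omega
  | inl hfin =>
    haveI := Fintype.ofFinite F
    haveI : Finite V := Module.finite_of_finite F
    haveI := Fintype.ofFinite V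
    set q := Fintype.card F with hqdef
    have hq : r < q := by
      have := hF
      rw [Cardinal.mk_fintype] at this
      exact_mod_cast this
    have hq0 : 0 < q := by omega
    -- cardinality of a submodule as a finset
    have hT' : ∀ P : Submodule F V, ((P : Set V)).toFinset.card = q ^ Module.finrank F P := by
      intro P
      rw [Set.toFinset_card]
      exact Module.card_eq_pow_finrank (K := F) (V := P)
    -- pick a hyperplane
    have hne : Nonempty {i // Module.finrank F (W i) = m + 1} := by
      apply Fintype.card_pos_iff.mp
      rw [hhyp]; omega
    obtain ⟨i₀, hi₀⟩ := hne.some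
    set T : I → Finset V := fun i => ((W i : Submodule F V) : Set V).toFinset with hTdef
    -- the union covers the universe
    have hsub : (Finset.univ : Finset V) ⊆
        T i₀ ∪ (Finset.univ.erase i₀).biUnion (fun i => T i \ T i₀) := by
      intro v _
      obtain ⟨i, hi⟩ := hcon v
      by_cases h0 : v ∈ W i₀
      · exact Finset.mem_union_left _ (Set.mem_toFinset.mpr h0)
      · refine Finset.mem_union_right _ (Finset.mem_biUnion.mpr ⟨i, ?_, ?_⟩)
        · exact Finset.mem_erase.mpr ⟨fun h => h0 (h ▸ hi), Finset.mem_univ _⟩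
        · exact Finset.mem_sdiff.mpr
            ⟨Set.mem_toFinset.mpr hi, fun h => h0 (Set.mem_toFinset.mp h)⟩
    -- each piece outside the hyperplane is small
    have hsd : ∀ i ∈ Finset.univ.erase i₀,
        (T i \ T i₀).card ≤ q ^ Module.finrank F (W i) - q ^ (Module.finrank F (W i) - 1) := by
      intro i _
      have h1 : (T i ∩ T i₀).card + (T i \ T i₀).card = (T i).card :=
        Finset.card_inter_add_card_sdiff _ _
      have hfr : Module.finrank F (W i) - 1 ≤ Module.finrank F ↥(W i ⊓ W i₀) := by
        have hs := Submodule.finrank_sup_add_finrank_inf_eq (W i) (W i₀)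
        have hsup : Module.finrank F ↥(W i ⊔ W i₀) ≤ m + 2 := by
          rw [← hV]; exact Submodule.finrank_le _
        rw [hi₀] at hs
        omega
      have h2 : q ^ (Module.finrank F (W i) - 1) ≤ (T i ∩ T i₀).card := by
        calc q ^ (Module.finrank F (W i) - 1)
            ≤ q ^ Module.finrank F ↥(W i ⊓ W i₀) := Nat.pow_le_pow_right hq0 hfr
          _ = (((W i ⊓ W i₀ : Submodule F V) : Set V)).toFinset.card := (hT' _).symm
          _ ≤ (T i ∩ T i₀).card := by
              apply Finset.card_le_card
              apply Finset.subset_inter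
              · exact Set.toFinset_subset_toFinset.mpr (SetLike.coe_subset_coe.mpr inf_le_left)
              · exact Set.toFinset_subset_toFinset.mpr (SetLike.coe_subset_coe.mpr inf_le_right)
      have h3 : (T i).card = q ^ Module.finrank F (W i) := hT' _
      omega
    -- counting the fibers over each dimension
    have hfib : ∀ k ∈ Finset.Icc 1 (m + 1),
        ((Finset.univ.erase i₀).filter (fun i => Module.finrank F (W i) = k)).card = r := by
      intro k hk
      obtain ⟨hk1, hk2⟩ := Finset.mem_Icc.mp hk
      rw [Finset.filter_erase (p := fun i => Module.finrank F (W i) = k) i₀ Finset.univ]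
      rcases eq_or_ne k (m + 1) with rfl | hne
      · rw [Finset.card_erase_of_mem
          (s := Finset.univ.filter (fun i => Module.finrank F (W i) = m + 1)) (a := i₀)
          (Finset.mem_filter.mpr ⟨Finset.mem_univ _, hi₀⟩), hhyp']
        omega
      · have hnot : i₀ ∉ Finset.univ.filter (fun i => Module.finrank F (W i) = k) := by
          simp only [Finset.mem_filter]
          rintro ⟨-, h⟩
          exact hne (by omega)
        rw [Finset.erase_eq_of_notMem hnot]
        exact hdim' k hk1 (by omega)
    -- the total count
    have hsum : ∑ i ∈ Finset.univ.erase i₀,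
        (q ^ Module.finrank F (W i) - q ^ (Module.finrank F (W i) - 1))
        = r * (q ^ (m + 1) - 1) := by
      rw [← Finset.sum_fiberwise_of_maps_to
        (g := fun i => Module.finrank F (W i)) (t := Finset.Icc 1 (m + 1))
        (fun i _ => Finset.mem_Icc.mpr ⟨(hmem i).1, (hmem i).2⟩)
        (fun i => q ^ Module.finrank F (W i) - q ^ (Module.finrank F (W i) - 1))]
      have : ∀ k ∈ Finset.Icc 1 (m + 1),
          (∑ i ∈ (Finset.univ.erase i₀).filter (fun i => Module.finrank F (W i) = k),
            (q ^ Module.finrank F (W i) - q ^ (Module.finrank F (W i) - 1)))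
          = r * (q ^ k - q ^ (k - 1)) := by
        intro k hk
        rw [Finset.sum_congr rfl (fun i hi => by
          rw [(Finset.mem_filter.mp hi).2]), Finset.sum_const, hfib k hk, smul_eq_mul]
      have tele : ∀ M : ℕ, ∑ k ∈ Finset.Icc 1 M, (q ^ k - q ^ (k - 1)) = q ^ M - 1 := by
        intro M
        induction M with
        | zero => simp
        | succ p ih =>
          rw [Finset.sum_Icc_succ_top (by omega : 1 ≤ p + 1), ih]
          have h1 : 1 ≤ q ^ p := Nat.one_le_pow _ _ hq0
          have h2 : q ^ p ≤ q ^ (p + 1) := Nat.pow_le_pow_right hq0 (by omega)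
          simp only [Nat.add_sub_cancel]
          omega
      refine Eq.trans (Finset.sum_congr rfl (fun k hk =>
        Eq.trans (Finset.sum_congr (@Finset.filter_congr _
            (fun i => Module.finrank F (W i) = k) (fun i => Module.finrank F (W i) = k)
            (fun a => instDecidableEqNat (Module.finrank F (W a)) k) inferInstance _
            (fun x _ => Iff.rfl)) (fun i _ => rfl))
          (this k hk))) ?_
      rw [← Finset.mul_sum, tele]
    -- the final counting contradiction
    have hVcard : Fintype.card V = q ^ (m + 2) := by
      rw [Module.card_eq_pow_finrank (K := F) (V := V), hV]
    have hmain : q ^ (m + 2) ≤ q ^ (m + 1) + r * (q ^ (m + 1) - 1) := by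
      calc q ^ (m + 2) = (Finset.univ : Finset V).card := by rw [Finset.card_univ, hVcard]
        _ ≤ (T i₀ ∪ (Finset.univ.erase i₀).biUnion (fun i => T i \ T i₀)).card :=
            Finset.card_le_card hsub
        _ ≤ (T i₀).card + ((Finset.univ.erase i₀).biUnion (fun i => T i \ T i₀)).card :=
            Finset.card_union_le _ _
        _ ≤ (T i₀).card + ∑ i ∈ Finset.univ.erase i₀, (T i \ T i₀).card := by
            exact Nat.add_le_add_left (Finset.card_biUnion_le) _
        _ ≤ q ^ (m + 1) + ∑ i ∈ Finset.univ.erase i₀,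
              (q ^ Module.finrank F (W i) - q ^ (Module.finrank F (W i) - 1)) := by
            apply Nat.add_le_add
            · rw [hT' (W i₀), hi₀]
            · exact Finset.sum_le_sum hsd
        _ = q ^ (m + 1) + r * (q ^ (m + 1) - 1) := by rw [hsum]
    -- arithmetic: q^(m+2) = q * q^(m+1) ≥ (r+1) * q^(m+1) > q^(m+1) + r*(q^(m+1)-1)
    obtain ⟨B, hB⟩ : ∃ B, q ^ (m + 1) = B + 1 :=
      ⟨q ^ (m + 1) - 1, by have := Nat.one_le_pow (m + 1) q hq0; omega⟩
    have hpow : q ^ (m + 2) = q * q ^ (m + 1) := by ring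
    rw [hpow, hB] at hmain
    have hBsub : B + 1 - 1 = B := by omega
    rw [hBsub] at hmain
    have hq' : (r + 1) * (B + 1) ≤ q * (B + 1) :=
      Nat.mul_le_mul_right _ (by omega)
    nlinarith
end

section
/- Let U, V be finite-dimensional vector spaces over a field F, V_0 a linear subspace of V, and S a linear subspace of Hom(U,V). Let S^⊥ = {v ∈ Hom(V,U) : tr(v∘u) = 0 for all u ∈ S}. Then dim(S ∩ Hom(U,V_0)) + dim{v restricted to V_0 : v ∈ S^⊥} = (dim U)(dim V_0), where Hom(U,V_0) is identified with the subspace of Hom(U,V) of maps with range in V_0. -/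
variable {F U V : Type*} [Field F] [AddCommGroup U] [Module F U]
  [AddCommGroup V] [Module F V]

/-- The subspace of Hom(U,V) of maps with range contained in V₀. -/
def homInto (F : Type*) [Field F] {U V : Type*} [AddCommGroup U] [Module F U]
    [AddCommGroup V] [Module F V] (V0 : Submodule F V) : Submodule F (U →ₗ[F] V) where
  carrier := {u | ∀ x : U, u x ∈ V0}
  add_mem' := fun ha hb x => by simp only [LinearMap.add_apply]; exact V0.add_mem (ha x) (hb x)
  zero_mem' := fun x => by simp only [LinearMap.zero_apply]; exact V0.zero_mem
  smul_mem' := fun c u hu x => by simp only [LinearMap.smul_apply]; exact V0.smul_mem c (hu x)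

/-- The trace-orthogonal space S^⊥ ⊆ Hom(V,U) of a subspace S ⊆ Hom(U,V). -/
def traceOrtho (F : Type*) [Field F] {U V : Type*} [AddCommGroup U] [Module F U]
    [AddCommGroup V] [Module F V] (S : Submodule F (U →ₗ[F] V)) :
    Submodule F (V →ₗ[F] U) where
  carrier := {v | ∀ u ∈ S, LinearMap.trace F U (v ∘ₗ u) = 0}
  add_mem' := by
    intro a b ha hb u hu
    rw [LinearMap.add_comp, map_add, ha u hu, hb u hu, add_zero]
  zero_mem' := by
    intro u hu
    rw [LinearMap.zero_comp, map_zero]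
  smul_mem' := by
    intro c v hv u hu
    rw [LinearMap.smul_comp, map_smul, hv u hu, smul_zero]

/-!
The trace pairing `(v, u) ↦ tr (v ∘ u)` identifies `Hom(V, U)` with the dual of `Hom(U, V)`
(test `v` against the rank-one maps `x ↦ φ x • w`), so `S^⊥` is the annihilator of `S` and
`dim S^⊥ + dim S = dim U · dim V`. The same rank-one maps show that `v` vanishes on `V₀` iff
`v ∈ Hom(U, V₀)^⊥`, so the kernel of restriction to `V₀` on `S^⊥` is `(S + Hom(U, V₀))^⊥`.
Rank–nullity for this restriction, together with
`dim (S + H) + dim (S ∩ H) = dim S + dim H` for `H = Hom(U, V₀)`, gives the formula.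
-/

open Module LinearMap

section RankNullity

variable {K M N : Type*} [Field K] [AddCommGroup M] [Module K M] [AddCommGroup N] [Module K N]

theorem Submodule.finrank_map_add_finrank_inf_ker [FiniteDimensional K M] (f : M →ₗ[K] N)
    (p : Submodule K M) :
    finrank K (p.map f) + finrank K ↥(p ⊓ ker f) = finrank K p := by
  have hker : ker (f.domRestrict p) = (p ⊓ ker f).comap p.subtype := by
    rw [ker_domRestrict, Submodule.comap_inf, Submodule.comap_subtype_self, top_inf_eq]
  rw [← (Submodule.comapSubtypeEquivOfLe inf_le_left).finrank_eq, ← hker, ← range_domRestrict,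
    finrank_range_add_finrank_ker]

end RankNullity

lemma trace_comp_smulRight [FiniteDimensional F U] (v : V →ₗ[F] U) (φ : Dual F U) (w : V) :
    trace F U (v ∘ₗ φ.smulRight w) = φ (v w) := by
  have : v ∘ₗ φ.smulRight w = φ.smulRight (v w) := by ext; simp
  rw [this, trace_smulRight]

lemma eq_zero_of_forall_trace_comp_smulRight [FiniteDimensional F U] {v : V →ₗ[F] U} {w : V}
    (h : ∀ φ : Dual F U, trace F U (v ∘ₗ φ.smulRight w) = 0) : v w = 0 := by
  rw [← forall_dual_apply_eq_zero_iff F]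
  simpa only [trace_comp_smulRight] using h

variable (F U V) in
noncomputable def tracePairing : (V →ₗ[F] U) →ₗ[F] Dual F (U →ₗ[F] V) :=
  (llcomp F U V U).compr₂ (trace F U)

lemma tracePairing_apply (v : V →ₗ[F] U) (u : U →ₗ[F] V) :
    tracePairing F U V v u = trace F U (v ∘ₗ u) := rfl

lemma tracePairing_injective [FiniteDimensional F U] :
    Function.Injective (tracePairing F U V) := by
  rw [← ker_eq_bot, Submodule.eq_bot_iff]
  intro v hv
  ext w
  exact eq_zero_of_forall_trace_comp_smulRight fun φ => LinearMap.congr_fun hv _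

variable (F U V) in
noncomputable def tracePairingEquiv [FiniteDimensional F U] [FiniteDimensional F V] :
    (V →ₗ[F] U) ≃ₗ[F] Dual F (U →ₗ[F] V) :=
  (tracePairing F U V).linearEquivOfInjective tracePairing_injective <| by
    rw [Subspace.dual_finrank_eq, finrank_linearMap, finrank_linearMap, mul_comm]

lemma traceOrtho_eq_comap (S : Submodule F (U →ₗ[F] V)) :
    traceOrtho F S = S.dualAnnihilator.comap (tracePairing F U V) :=
  Submodule.ext fun _ => by
    simp only [Submodule.mem_comap, Submodule.mem_dualAnnihilator, tracePairing_apply]; rfl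

lemma finrank_traceOrtho_add_finrank [FiniteDimensional F U] [FiniteDimensional F V]
    (S : Submodule F (U →ₗ[F] V)) :
    finrank F (traceOrtho F S) + finrank F S = finrank F U * finrank F V := by
 rw [traceOrtho_eq_comap, show tracePairing F U V = (tracePairingEquiv F U V).toLinearMap from rfl,
    Submodule.comap_equiv_eq_map_symm, LinearEquiv.finrank_map_eq, add_comm,
    Subspace.finrank_add_finrank_dualAnnihilator_eq, finrank_linearMap]

lemma traceOrtho_sup (S T : Submodule F (U →ₗ[F] V)) :
    traceOrtho F (S ⊔ T) = traceOrtho F S ⊓ traceOrtho F T := by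
  simp only [traceOrtho_eq_comap, Submodule.dualAnnihilator_sup_eq, Submodule.comap_inf]

lemma homInto_eq_range (V0 : Submodule F V) :
    homInto F (U := U) V0 = range (V0.subtype.compRight F) := by
  ext u
  refine ⟨fun hu => ⟨u.codRestrict V0 hu, rfl⟩, ?_⟩
  rintro ⟨u', rfl⟩ x
  exact (u' x).2

lemma finrank_homInto [FiniteDimensional F U] [FiniteDimensional F V] (V0 : Submodule F V) :
    finrank F (homInto F (U := U) V0) = finrank F U * finrank F V0 := by
  rw [homInto_eq_range, finrank_range_of_inj, finrank_linearMap]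
  intro a b h
  ext x
  rw [compRight_apply, compRight_apply] at h
  exact LinearMap.congr_fun h x

lemma traceOrtho_homInto [FiniteDimensional F U] (V0 : Submodule F V) :
    traceOrtho F (homInto F (U := U) V0) = ker (lcomp F U V0.subtype) := by
  ext v
  simp only [mem_ker, LinearMap.ext_iff, lcomp_apply, Submodule.subtype_apply,
    LinearMap.zero_apply, Subtype.forall]
  constructor
  · intro hv w hw
    exact eq_zero_of_forall_trace_comp_smulRight fun φ =>
      hv _ fun x => V0.smul_mem _ hw
  · intro hv u hu
    have : v ∘ₗ u = 0 := by ext x; exact hv _ (hu x)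
    rw [this, map_zero]

/-- First Trace Orthogonality Lemma:
dim(S ∩ Hom(U,V₀)) + dim{v|_{V₀} : v ∈ S^⊥} = (dim U)(dim V₀). -/
theorem stmt10 [FiniteDimensional F U] [FiniteDimensional F V]
    (V0 : Submodule F V) (S : Submodule F (U →ₗ[F] V)) :
    Module.finrank F ↥(S ⊓ homInto F V0) +
      Module.finrank F ↥((traceOrtho F S).map (LinearMap.lcomp F U V0.subtype)) =
    Module.finrank F U * Module.finrank F V0 := by
  have hrestrict := (traceOrtho F S).finrank_map_add_finrank_inf_ker (lcomp F U V0.subtype)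
  rw [← traceOrtho_homInto, ← traceOrtho_sup] at hrestrict
  have hS := finrank_traceOrtho_add_finrank S
  have hsup := finrank_traceOrtho_add_finrank (S ⊔ homInto F V0)
  have hdim := Submodule.finrank_sup_add_finrank_inf_eq S (homInto F V0)
  rw [finrank_homInto] at hdim
  omega
end

section
/- Let F be a field with |F| > 2, V a finite-dimensional vector space over F of dimension n ≥ 3, and S a linear subspace of End(V) such that every element of S has at most 2 distinct eigenvalues in F. Suppose there exists x ∈ V \ {0} such that S contains every rank-≤1 endomorphism with range contained in F·x (i.e., φ⊗x ∈ S for every linear form φ). Then every rank-1, trace-zero element of S vanishes at x. -/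
open Module LinearMap Submodule

/-- A dual functional equal to 1 at a vector outside a subspace and vanishing on it. -/
lemma aux_dual {F V : Type*} [Field F] [AddCommGroup V] [Module F V]
    (p : Submodule F V) (v : V) (hv : v ∉ p) :
    ∃ f : V →ₗ[F] F, f v = 1 ∧ ∀ w ∈ p, f w = 0 := by
  have hq : p.mkQ v ≠ 0 := by
    simpa [Submodule.Quotient.mk_eq_zero] using hv
  obtain ⟨g, hg⟩ : ∃ g : Module.Dual F (V ⧸ p), g (p.mkQ v) ≠ 0 := by
    by_contra h
    push_neg at h
    exact hq ((Module.forall_dual_apply_eq_zero_iff F (p.mkQ v)).mp h)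
  refine ⟨(g (p.mkQ v))⁻¹ • (g ∘ₗ p.mkQ), ?_, ?_⟩
  · simp only [LinearMap.smul_apply, LinearMap.coe_comp, Function.comp_apply, smul_eq_mul]
    exact inv_mul_cancel₀ hg
  · intro w hw
    simp [(Submodule.Quotient.mk_eq_zero p).mpr hw]

lemma aux_trace {F V : Type*} [Field F] [AddCommGroup V] [Module F V]
    [FiniteDimensional F V] (ψ : V →ₗ[F] F) (y : V) :
    LinearMap.trace F V (ψ.smulRight y) = ψ y := by
  have h : ψ.smulRight y = dualTensorHom F V V (ψ ⊗ₜ y) := by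
    ext z; simp [dualTensorHom_apply]
  rw [h, trace_eq_contract_apply, contractLeft_apply]

/-- First Confinement Lemma, dual version: let V be n-dimensional with n ≥ 3 over a
field with more than 2 elements, and S ⊆ End(V) a subspace all of whose elements have
at most 2 distinct eigenvalues in F. If S contains φ ⊗ x for every linear form φ (for
some fixed x ≠ 0), then every rank-1 trace-zero element of S vanishes at x. -/
theorem stmt12 {F V : Type*} [Field F] [AddCommGroup V] [Module F V]
    [FiniteDimensional F V] {n : ℕ} (hn : 3 ≤ n) (hV : Module.finrank F V = n)
    (hF : 2 < Cardinal.mk F)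
    (S : Submodule F (V →ₗ[F] V))
    (hspec : ∀ u ∈ S, ∃ a b : F, ∀ c : F, Module.End.HasEigenvalue u c → c = a ∨ c = b)
    (x : V) (hx : x ≠ 0)
    (hall : ∀ φ : V →ₗ[F] F, φ.smulRight x ∈ S) :
    ∀ u ∈ S, LinearMap.trace F V u = 0 →
      Module.finrank F (LinearMap.range u) = 1 → u x = 0 := by
  classical
  intro u hu htr hrk
  -- get a generator y of the range of u
  obtain ⟨v, hv0, hvspan⟩ := (finrank_eq_one_iff' (K := F) (V := LinearMap.range u)).mp hrk
  set y : V := (v : V) with hy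
  have hy0 : y ≠ 0 := fun h => hv0 (Subtype.ext h)
  -- a functional f with f y = 1
  obtain ⟨f, hf1, -⟩ := aux_dual (⊥ : Submodule F V) y (by simpa using hy0)
  set ψ : V →ₗ[F] F := f ∘ₗ u with hψ
  have hukey : ∀ z : V, u z = ψ z • y := by
    intro z
    obtain ⟨d, hd⟩ := hvspan ⟨u z, LinearMap.mem_range_self u z⟩
    have hd' : u z = d • y := by
      have := congrArg (Subtype.val) hd
      simpa [hy] using this.symm
    have : ψ z = d := by simp [hψ, hd', hf1]
    rw [this, hd']
  have hueq : u = ψ.smulRight y := by ext z; simp [hukey z]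
  -- trace zero gives ψ y = 0
  have hψy : ψ y = 0 := by
    rw [hueq, aux_trace] at htr; exact htr
  set c : F := ψ x with hc
  by_cases hc0 : c = 0
  · rw [hukey x, ← hc, hc0, zero_smul]
  -- independence of x and y
  exfalso
  have hind : ∀ s t : F, s • x + t • y = 0 → s = 0 ∧ t = 0 := by
    intro s t hst
    have h1 : s * c = 0 := by
      have := congrArg ψ hst
      simpa [map_add, map_smul, hψy, ← hc, smul_eq_mul] using this
    have hs : s = 0 := by
      rcases mul_eq_zero.mp h1 with h | h
      · exact h
      · exact absurd h hc0
    refine ⟨hs, ?_⟩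
    rw [hs, zero_smul, zero_add] at hst
    exact (smul_eq_zero.mp hst).resolve_right hy0
  have hxy : x ∉ Submodule.span F {y} := by
    intro h
    obtain ⟨d, hd⟩ := Submodule.mem_span_singleton.mp h
    have : (1 : F) • x + (-d) • y = 0 := by
      rw [one_smul, ← hd, neg_smul, add_neg_cancel]
    exact one_ne_zero (hind 1 (-d) this).1
  have hyx : y ∉ Submodule.span F {x} := by
    intro h
    obtain ⟨d, hd⟩ := Submodule.mem_span_singleton.mp h
    have : d • x + (-1 : F) • y = 0 := by
      rw [← hd, neg_smul, one_smul, add_neg_cancel]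
    exact neg_ne_zero.mpr one_ne_zero (hind d (-1) this).2
  -- a scalar lam different from 0 and 1
  obtain ⟨lam, hlam0, hlam1⟩ : ∃ lam : F, lam ≠ 0 ∧ lam ≠ 1 := by
    by_contra h
    push_neg at h
    have : Cardinal.mk F = 2 := by
      rw [Cardinal.mk_eq_two_iff]
      refine ⟨0, 1, zero_ne_one, ?_⟩
      ext a
      simp only [Set.mem_insert_iff, Set.mem_singleton_iff, Set.mem_univ, iff_true]
      by_cases ha : a = 0
      · exact Or.inl ha
      · exact Or.inr (h a ha)
    rw [this] at hF; exact lt_irrefl _ hF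
  -- functionals separating x and y
  obtain ⟨f₁, hf₁x, hf₁⟩ := aux_dual (Submodule.span F {y}) x hxy
  obtain ⟨f₂, hf₂y, hf₂⟩ := aux_dual (Submodule.span F {x}) y hyx
  have hf₁y : f₁ y = 0 := hf₁ y (Submodule.mem_span_singleton_self y)
  have hf₂x : f₂ x = 0 := hf₂ x (Submodule.mem_span_singleton_self x)
  set φ : V →ₗ[F] F := (1 + lam) • f₁ + (-(lam * c⁻¹)) • f₂ with hφ
  have hφx : φ x = 1 + lam := by simp [hφ, hf₁x, hf₂x]
  have hφy : φ y = -(lam * c⁻¹) := by simp [hφ, hf₁y, hf₂y]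
  set w : V →ₗ[F] V := ψ.smulRight y + φ.smulRight x with hw
  have hwS : w ∈ S := S.add_mem (hueq ▸ hu) (hall φ)
  have hwapp : ∀ z : V, w z = ψ z • y + φ z • x := by intro z; simp [hw]
  -- eigenvalue 0
  have hker : LinearMap.ker w ≠ ⊥ := by
    intro h
    have hinj : Function.Injective w := LinearMap.ker_eq_bot.mp h
    have h1 : finrank F (LinearMap.range w) = n := by
      rw [LinearMap.finrank_range_of_inj hinj, hV]
    have h2 : LinearMap.range w ≤ Submodule.span F {x, y} := by
      rintro _ ⟨z, rfl⟩
      rw [hwapp]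
      exact Submodule.add_mem _
        (Submodule.smul_mem _ _ (Submodule.subset_span (by simp)))
        (Submodule.smul_mem _ _ (Submodule.subset_span (by simp)))
    have h3 : finrank F (LinearMap.range w) ≤ 2 := by
      refine le_trans (Submodule.finrank_mono h2) (le_trans (finrank_span_le_card _) ?_)
      have : ({x, y} : Set V).toFinset.card ≤ 2 := by
        simp only [Set.toFinset_insert, Set.toFinset_singleton]
        exact le_trans (Finset.card_insert_le _ _) (by simp)
      exact this
    omega
  obtain ⟨z, hz, hz0⟩ := Submodule.exists_mem_ne_zero_of_ne_bot hker
  have he0 : Module.End.HasEigenvalue w 0 :=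
    Module.End.hasEigenvalue_of_hasEigenvector
      ⟨Module.End.mem_eigenspace_iff.mpr (by simp [LinearMap.mem_ker.mp hz]), hz0⟩
  -- eigenvalue 1 with eigenvector x + c • y
  have hctc : c * (c⁻¹ : F) = 1 := mul_inv_cancel₀ hc0
  have he1 : Module.End.HasEigenvalue w 1 := by
    refine Module.End.hasEigenvalue_of_hasEigenvector (x := x + c • y)
      ⟨Module.End.mem_eigenspace_iff.mpr ?_, ?_⟩
    · rw [hwapp]
      have hψv : ψ (x + c • y) = c := by simp [map_add, map_smul, hψy, ← hc]
      have hφv : φ (x + c • y) = 1 := by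
        rw [map_add, map_smul, hφx, hφy, smul_eq_mul]
        field_simp
        ring
      rw [hψv, hφv, one_smul, one_smul]
      abel
    · intro h
      have : (1 : F) • x + c • y = 0 := by rw [one_smul]; exact h
      exact one_ne_zero (hind 1 c this).1
  -- eigenvalue lam with eigenvector lam • x + c • y
  have helam : Module.End.HasEigenvalue w lam := by
    refine Module.End.hasEigenvalue_of_hasEigenvector (x := lam • x + c • y)
      ⟨Module.End.mem_eigenspace_iff.mpr ?_, ?_⟩
    · rw [hwapp]
      have hψv : ψ (lam • x + c • y) = lam * c := by
        simp [map_add, map_smul, hψy, ← hc]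
      have hφv : φ (lam • x + c • y) = lam * lam := by
        rw [map_add, map_smul, map_smul, hφx, hφy, smul_eq_mul, smul_eq_mul]
        field_simp
        ring
      rw [hψv, hφv]
      module
    · intro h
      exact hc0 (hind lam c h).2
  -- contradiction: three distinct eigenvalues
  obtain ⟨a, b, hab⟩ := hspec w hwS
  have h0 := hab 0 he0
  have h1 := hab 1 he1
  have hl := hab lam helam
  rcases h0 with h0 | h0 <;> rcases h1 with h1 | h1 <;> rcases hl with hl | hl
  · exact zero_ne_one (h0.trans h1.symm)
  · exact zero_ne_one (h0.trans h1.symm)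
  · exact hlam0 (hl.trans h0.symm)
  · exact hlam1 (hl.trans h1.symm)
  · exact hlam1 (hl.trans h1.symm)
  · exact hlam0 (hl.trans h0.symm)
  · exact zero_ne_one (h0.trans h1.symm)
  · exact zero_ne_one (h0.trans h1.symm)
end

section
/- Let F be a field with |F| > 2, V a finite-dimensional vector space over F of dimension n ≥ 3, and S a linear subspace of End(V) with: (a) every element of S has at most 2 distinct eigenvalues in F; (b) φ⊗V ⊆ S for some nonzero linear form φ on V (i.e., φ⊗y ∈ S for all y ∈ V). Then for every x ∈ V such that some nonzero ψ ∈ V* satisfies ψ(x)=0 and ψ⊗x ∈ S, one has φ(x) = 0. -/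
/-! If `φ x ≠ 0`, pick `μ ∉ {0, 1}` and `y` with `φ y = 1 + μ`, `ψ y = -μ / φ x`. The
operator `u = φ ⊗ y + ψ ⊗ x ∈ S` preserves `span {x, y}` and acts there with characteristic
polynomial `t² - φ(y) t - φ(x) ψ(y) = (t - 1)(t - μ)`, while it kills the common kernel of `φ`
and `ψ`, which is nonzero since `dim V ≥ 3`. So `u` has the three eigenvalues `0, 1, μ`. -/

open Module

namespace LinearMap

variable {F V : Type*} [Field F] [AddCommGroup V] [Module F V]

theorem exists_apply_eq_and_apply_eq {φ ψ : V →ₗ[F] F} {x : V} (hψ : ψ ≠ 0)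
    (hψx : ψ x = 0) (hφx : φ x ≠ 0) (s t : F) : ∃ y, φ y = s ∧ ψ y = t := by
  obtain ⟨w, hw⟩ : ∃ w, ψ w = 1 := by
    obtain ⟨v, hv⟩ := not_forall.mp (mt ext hψ)
    exact ⟨(ψ v)⁻¹ • v, by simp [inv_mul_cancel₀ hv]⟩
  refine ⟨t • w + ((s - t * φ w) / φ x) • x, ?_, ?_⟩
  · simp [div_mul_cancel₀ _ hφx]
  · simp [hw, hψx]

theorem exists_ne_zero_apply_eq_zero_and_apply_eq_zero (φ ψ : V →ₗ[F] F)
    (h : 2 < finrank F V) : ∃ z ≠ 0, φ z = 0 ∧ ψ z = 0 := by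
  by_contra! hz
  have hinj : Function.Injective (φ.prod ψ) :=
    (injective_iff_map_eq_zero _).mpr fun z hz0 ↦ by
      by_contra hne
      exact hz z hne (congrArg Prod.fst hz0) (congrArg Prod.snd hz0)
  have := finrank_le_finrank_of_injective hinj
  simp only [finrank_prod, finrank_self] at this
  omega

theorem hasEigenvalue_zero_smulRight_add_smulRight (φ ψ : V →ₗ[F] F) (x y : V)
    (h : 2 < finrank F V) : End.HasEigenvalue (φ.smulRight y + ψ.smulRight x) 0 := by
  obtain ⟨z, hz, hφz, hψz⟩ := exists_ne_zero_apply_eq_zero_and_apply_eq_zero φ ψ h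
  exact End.hasEigenvalue_of_hasEigenvector (x := z)
    ⟨End.mem_eigenspace_iff.mpr (by simp [hφz, hψz]), hz⟩

theorem hasEigenvalue_smulRight_add_smulRight {φ ψ : V →ₗ[F] F} {x : V} (y : V) {c : F}
    (hc : c ≠ 0) (hψx : ψ x = 0) (hroot : c ^ 2 = φ y * c + φ x * ψ y) :
    End.HasEigenvalue (φ.smulRight y + ψ.smulRight x) c := by
  have hφv : φ (ψ y • x + c • y) = c ^ 2 := by
    simp only [map_add, map_smul, smul_eq_mul, hroot]; ring
  refine End.hasEigenvalue_of_hasEigenvector (x := ψ y • x + c • y) ⟨?_, ?_⟩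
  · rw [End.mem_eigenspace_iff, add_apply, smulRight_apply, smulRight_apply, hφv]
    simp only [map_add, map_smul, hψx, smul_eq_mul]
    module
  · intro hv
    rw [hv, map_zero] at hφv
    exact pow_ne_zero 2 hc hφv.symm

end LinearMap

theorem stmt13_general {F V : Type*} [Field F] [AddCommGroup V] [Module F V]
    {n : ℕ} (hn : 3 ≤ n) (hV : Module.finrank F V = n)
    (hF : 2 < Cardinal.mk F)
    (S : Submodule F (V →ₗ[F] V))
    (hspec : ∀ u ∈ S, ∃ a b : F, ∀ c : F, Module.End.HasEigenvalue u c → c = a ∨ c = b)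
    (φ : V →ₗ[F] F)
    (hall : ∀ y : V, φ.smulRight y ∈ S) :
    ∀ x : V, (∃ ψ : V →ₗ[F] F, ψ ≠ 0 ∧ ψ x = 0 ∧ ψ.smulRight x ∈ S) → φ x = 0 := by
  rintro x ⟨ψ, hψ, hψx, hψS⟩
  by_contra hφx
  obtain ⟨μ, hμ0, hμ1⟩ := Cardinal.exists_ne_ne_of_three_le (α := F)
    (by exact_mod_cast (Cardinal.succ_natCast 2).symm.trans_le (Order.succ_le_of_lt hF)) 0 1
  obtain ⟨y, hφy, hψy⟩ := LinearMap.exists_apply_eq_and_apply_eq hψ hψx hφx (1 + μ) (-μ / φ x)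
  have hroot : ∀ c, (c - 1) * (c - μ) = 0 → c ^ 2 = φ y * c + φ x * ψ y := fun c hc ↦ by
    rw [hφy, hψy, mul_div_cancel₀ _ hφx]
    linear_combination hc
  obtain ⟨p, q, hpq⟩ := hspec _ (S.add_mem (hall y) hψS)
  have h0 := hpq 0 (LinearMap.hasEigenvalue_zero_smulRight_add_smulRight φ ψ x y (by omega))
  have h1 := hpq 1 <|
    LinearMap.hasEigenvalue_smulRight_add_smulRight y one_ne_zero hψx (hroot 1 (by ring))
  have hμ := hpq μ <|
    LinearMap.hasEigenvalue_smulRight_add_smulRight y hμ0 hψx (hroot μ (by ring))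
  grind

/-- First Confinement Lemma: let V be n-dimensional with n ≥ 3 over a field with more
than 2 elements, and S ⊆ End(V) a subspace all of whose elements have at most 2
distinct eigenvalues in F. If φ ⊗ V ⊆ S for some nonzero linear form φ, then every
non-S-adapted vector x (one admitting a nonzero ψ with ψ(x) = 0 and ψ ⊗ x ∈ S) lies in
the hyperplane ker φ. -/
theorem stmt13 {F V : Type*} [Field F] [AddCommGroup V] [Module F V]
    [FiniteDimensional F V] {n : ℕ} (hn : 3 ≤ n) (hV : Module.finrank F V = n)
    (hF : 2 < Cardinal.mk F)
    (S : Submodule F (V →ₗ[F] V))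
    (hspec : ∀ u ∈ S, ∃ a b : F, ∀ c : F, Module.End.HasEigenvalue u c → c = a ∨ c = b)
    (φ : V →ₗ[F] F) (hφ : φ ≠ 0)
    (hall : ∀ y : V, φ.smulRight y ∈ S) :
    ∀ x : V, (∃ ψ : V →ₗ[F] F, ψ ≠ 0 ∧ ψ x = 0 ∧ ψ.smulRight x ∈ S) → φ x = 0 :=
  stmt13_general hn hV hF S hspec φ hall
end

section
/- Let F be a field with |F| > 2, n ≥ 3, V an n-dimensional vector space over F, P a 2-dimensional linear subspace of V, and S a linear subspace of End(V) such that every element of S has at most 2 distinct eigenvalues in F. Assume φ⊗x ∈ S for all φ ∈ V* and x ∈ P with φ(x) = 0. Then P is invariant under every element of S. -/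
/-!
Adding up maps `φ ⊗ x` with `x ∈ P`, `φ x = 0` gives every trace-zero map with range in `P`, so
`S` contains `u + w` for all such `w`. If `u x ∉ P` for some `x ∈ P`, we choose `w` so that `u + w`
has eigenvectors for three distinct eigenvalues: a vector `a` can become an eigenvector for `l`
as soon as `u a - l • a ∈ P`, and `w` is then prescribed on the eigenvectors.

If `P` lies in no `u`-invariant subspace of dimension `3`, there are three independent such
vectors whose span does not contain `P`, and the trace of `w` can be corrected on the missing part
of `P`. Otherwise `P ⊔ span {u x}` is invariant, and the three eigenvalues must add up to the trace
of `u` on it; in characteristic `2` with `|F| > 2` this is possible. In characteristic `≠ 2` the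
trace-zero map `diag (1, -1, 0)` in a basis `x, y, z` with `x, y ∈ P` already has three
eigenvalues.
-/

open Module Submodule LinearMap Function

section

variable {F V : Type*} [Field F] [AddCommGroup V] [Module F V]

theorem Submodule.finrank_le_finrank_comap [FiniteDimensional F V] (P : Submodule F V)
    (f : V →ₗ[F] V) : finrank F P ≤ finrank F (P.comap f) := by
  have hker : P.comap f = ker (P.mkQ ∘ₗ f) := by rw [ker_comp, ker_mkQ]
  have := finrank_range_add_finrank_ker (P.mkQ ∘ₗ f)
  have := (range (P.mkQ ∘ₗ f)).finrank_le
  have := P.finrank_quotient_add_finrank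
  rw [hker]
  omega

theorem exists_mem_notMem_span_singleton {P : Submodule F V} [FiniteDimensional F P]
    (hP : 2 ≤ finrank F P) (x : V) : ∃ y ∈ P, y ∉ span F {x} := by
  by_contra! h
  have := (finrank_mono (h : P ≤ span F {x})).trans (finrank_span_le_card ({x} : Set V))
  rw [Set.toFinset_singleton, Finset.card_singleton] at this
  omega

theorem LinearIndependent.exists_dual_apply_eq_ite {ι : Type*} [DecidableEq ι] {a : ι → V}
    (ha : LinearIndependent F a) :
    ∃ g : ι → Dual F V, ∀ i j, g i (a j) = if i = j then 1 else 0 := by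
  choose g hg using fun i => exists_extend ((Basis.span ha).coord i)
  refine ⟨g, fun i j => ?_⟩
  have := congr($(hg i) ((Basis.span ha) j))
  simpa [Basis.span_apply, Finsupp.single_apply, eq_comm] using this

theorem LinearIndependent.exists_dual_three {x y z : V} (h : LinearIndependent F ![x, y, z]) :
    ∃ g₀ g₁ g₂ : Dual F V, g₀ x = 1 ∧ g₀ y = 0 ∧ g₀ z = 0 ∧ g₁ x = 0 ∧ g₁ y = 1 ∧ g₁ z = 0 ∧
      g₂ x = 0 ∧ g₂ y = 0 ∧ g₂ z = 1 := by
  obtain ⟨g, hg⟩ := h.exists_dual_apply_eq_ite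
  exact ⟨g 0, g 1, g 2, by simpa [Fin.forall_fin_succ, and_assoc] using hg⟩

theorem linearIndependent_three {a₁ a₂ a₃ : V} (h₁ : a₁ ≠ 0) (h₂ : a₂ ∉ span F {a₁})
    (h₃ : a₃ ∉ span F {a₁, a₂}) : LinearIndependent F ![a₁, a₂, a₃] := by
  have : ![a₁, a₂, a₃] = Fin.snoc ![a₁, a₂] a₃ := by ext i; fin_cases i <;> rfl
  rw [this, linearIndependent_finSnoc, LinearIndependent.pair_iff' h₁]
  refine ⟨fun c hc => h₂ (hc ▸ smul_mem _ _ (mem_span_singleton_self a₁)), ?_⟩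
  simpa [Matrix.range_cons, Set.pair_comm a₂ a₁] using h₃

theorem linearIndependent_of_mem_of_notMem {P : Submodule F V} {x y z : V} (hx : x ∈ P)
    (hy : y ∈ P) (hx0 : x ≠ 0) (hyx : y ∉ span F {x}) (hz : z ∉ P) :
    LinearIndependent F ![x, y, z] :=
  linearIndependent_three hx0 hyx fun h =>
    hz (span_le.mpr (by simp [Set.insert_subset_iff, hx, hy]) h)

theorem injective_three {α : Type*} {a b c : α} (hab : a ≠ b) (hac : a ≠ c) (hbc : b ≠ c) :
    Injective ![a, b, c] := by
  intro i j h
  fin_cases i <;> fin_cases j <;> simp_all [eq_comm]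

theorem exists_injective_add_add_eq (h3 : (3 : F) ≠ 0) (hF : 2 < Cardinal.mk F) (τ : F) :
    ∃ l : Fin 3 → F, Injective l ∧ l 0 + l 1 + l 2 = τ := by
  obtain ⟨z, hz⟩ := Cardinal.exists_notMem_of_length_lt [(0 : F), 1] (by simpa using hF)
  simp only [List.mem_cons, List.not_mem_nil, or_false, not_or] at hz
  set c := (τ - (1 + z)) / 3
  refine ⟨![c, 1 + c, z + c], ?_, ?_⟩
  · exact injective_three (by simp) (by simp [hz.1]) (by simpa using Ne.symm hz.2)
  · simp only [Matrix.cons_val_zero, Matrix.cons_val_one, Matrix.cons_val_two, Matrix.tail_cons,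
      Matrix.head_cons, c]
    field_simp
    ring

section RankOne

variable {P : Submodule F V} {S : Submodule F (V →ₗ[F] V)}

theorem smulRight_sub_smul_smulRight_mem
    (hall : ∀ φ : Dual F V, ∀ x ∈ P, φ x = 0 → φ.smulRight x ∈ S)
    {q : V} (hq : q ∈ P) {ξ : Dual F V} (hξ : ξ q = 1) (ψ : Dual F V) {p : V} (hp : p ∈ P) :
    ψ.smulRight p - ψ p • ξ.smulRight q ∈ S := by
  -- `ξ p' = 1` makes each of the three rank-one maps below square-zero.
  set p' := p + (1 - ξ p) • q
  have hp'P : p' ∈ P := add_mem hp (smul_mem _ _ hq)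
  have hξp' : ξ p' = 1 := by simp [p', hξ]
  have key : ψ.smulRight p - ψ p • ξ.smulRight q =
      (ψ - ψ p' • ξ).smulRight p' + ψ p' • ξ.smulRight (p' - q) -
        (1 - ξ p) • (ψ - ψ q • ξ).smulRight q := by
    ext v
    simp only [p', map_add, map_smul, smul_eq_mul, LinearMap.sub_apply, LinearMap.add_apply,
      LinearMap.smul_apply, smulRight_apply]
    module
  rw [key]
  refine sub_mem (add_mem (hall _ _ hp'P ?_) (smul_mem _ _ (hall _ _ (sub_mem hp'P hq) ?_)))
    (smul_mem _ _ (hall _ _ hq ?_))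
  · simp [hξp']
  · simp [hξp', hξ]
  · simp [hξ]

theorem mem_of_range_le_of_trace_eq_zero [FiniteDimensional F V]
    (hall : ∀ φ : Dual F V, ∀ x ∈ P, φ x = 0 → φ.smulRight x ∈ S)
    {w : V →ₗ[F] V} (hw : range w ≤ P) (htr : trace F V w = 0) : w ∈ S := by
  obtain rfl | hP := eq_or_ne P ⊥
  · rw [le_bot_iff, range_eq_bot] at hw
    exact hw ▸ zero_mem S
  obtain ⟨q, hqP, hq0⟩ := exists_mem_ne_zero_of_ne_bot hP
  obtain ⟨f, hfq, -⟩ := exists_le_ker_of_notMem (p := ⊥) (fun h => hq0 ((mem_bot F).mp h))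
  set ξ : Dual F V := (f q)⁻¹ • f
  have hξ : ξ q = 1 := by simp [ξ, hfq]
  let b := finBasis F P
  let w' := w.codRestrict P (fun v => hw ⟨v, rfl⟩)
  let ψ : Fin (finrank F P) → Dual F V := fun i => b.coord i ∘ₗ w'
  have hsum : w = ∑ i, (ψ i).smulRight (b i : V) := by
    ext v
    have h := congr_arg Subtype.val (b.sum_repr (w' v))
    simp only [w', Submodule.coe_sum, Submodule.coe_smul, codRestrict_apply] at h
    simpa [ψ] using h.symm
  have key : w = ∑ i, ((ψ i).smulRight (b i : V) - ψ i (b i) • ξ.smulRight q) +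
      trace F V w • ξ.smulRight q := by
    conv_lhs => rw [hsum]
    conv_rhs => rw [hsum]
    simp [Finset.sum_sub_distrib, Finset.sum_smul]
  rw [key, htr, zero_smul, add_zero]
  exact sum_mem fun i _ => smulRight_sub_smul_smulRight_mem hall hqP hξ _ (b i).2

end RankOne

theorem exists_range_le_trace_eq_zero_apply_eq [FiniteDimensional F V] {ι : Type*} [Fintype ι]
    {P : Submodule F V} {a b : ι → V} (ha : LinearIndependent F a) (hb : ∀ i, b i ∈ P) {p : V}
    (hpP : p ∈ P) (hp : p ∉ span F (Set.range a)) :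
    ∃ w : V →ₗ[F] V, range w ≤ P ∧ trace F V w = 0 ∧ ∀ i, w (a i) = b i := by
  classical
  obtain ⟨g, hg⟩ := ha.exists_dual_apply_eq_ite
  obtain ⟨χ, hχp, hχa⟩ := exists_le_ker_of_notMem hp
  set w₀ := ∑ i, (g i).smulRight (b i)
  refine ⟨w₀ - (trace F V w₀ / χ p) • χ.smulRight p, ?_, ?_, fun j => ?_⟩
  · rintro _ ⟨v, rfl⟩
    simp only [w₀, LinearMap.sub_apply, LinearMap.smul_apply, LinearMap.sum_apply,
      smulRight_apply]
    exact sub_mem (sum_mem fun i _ => smul_mem _ _ (hb i)) (smul_mem _ _ (smul_mem _ _ hpP))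
  · simp [hχp]
  · have hχaj : χ (a j) = 0 := hχa (subset_span (Set.mem_range_self j))
    simp [w₀, hg, hχaj]

def HasThreeEigenvalues (v : Module.End F V) : Prop :=
  ∃ l : Fin 3 → F, Injective l ∧ ∀ i, v.HasEigenvalue (l i)

theorem hasThreeEigenvalues_of_apply_eq {v : Module.End F V} {l : Fin 3 → F} (hl : Injective l)
    {a : Fin 3 → V} (ha : ∀ i, a i ≠ 0) (hva : ∀ i, v (a i) = l i • a i) :
    HasThreeEigenvalues v :=
  ⟨l, hl, fun i => Module.End.hasEigenvalue_of_hasEigenvector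
    ⟨Module.End.mem_eigenspace_iff.mpr (hva i), ha i⟩⟩

theorem not_hasThreeEigenvalues {v : Module.End F V}
    (hv : ∃ α β : F, ∀ c, v.HasEigenvalue c → c = α ∨ c = β) : ¬ HasThreeEigenvalues v := by
  classical
  rintro ⟨l, hl, hlv⟩
  obtain ⟨α, β, hαβ⟩ := hv
  obtain ⟨i, -, j, -, hij, h⟩ := Finset.exists_ne_map_eq_of_card_lt_of_maps_to
    (s := (Finset.univ : Finset (Fin 3))) (t := {α, β})
    (Finset.card_le_two.trans_lt (by simp [Finset.card_univ]))
    (fun i _ => by simpa using hαβ _ (hlv i))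
  exact hij (hl h)

theorem exists_range_le_trace_eq_zero_hasThreeEigenvalues_of_two_ne_zero [FiniteDimensional F V]
    {P : Submodule F V} (h2 : (2 : F) ≠ 0) {x y z : V} (hx : x ∈ P) (hy : y ∈ P)
    (hli : LinearIndependent F ![x, y, z]) :
    ∃ w : V →ₗ[F] V, range w ≤ P ∧ trace F V w = 0 ∧ HasThreeEigenvalues w := by
  obtain ⟨g₀, g₁, _, hg⟩ := hli.exists_dual_three
  refine ⟨g₀.smulRight x - g₁.smulRight y, ?_, by simp [hg],
    hasThreeEigenvalues_of_apply_eq (l := ![1, -1, 0]) ?_ hli.ne_zero ?_⟩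
  · rintro _ ⟨v, rfl⟩
    simpa using sub_mem (smul_mem _ (g₀ v) hx) (smul_mem _ (g₁ v) hy)
  · exact injective_three (fun h => h2 (by linear_combination h)) one_ne_zero (by simp)
  · intro i
    fin_cases i <;> simp [hg]

theorem sub_smul_notMem {P : Submodule F V} {u : V →ₗ[F] V} {a : V} {l l' : F}
    (ha : u a - l • a ∈ P) (haP : a ∉ P) (hl : l ≠ l') : u a - l' • a ∉ P := by
  intro h
  have : (l' - l) • a = (u a - l • a) - (u a - l' • a) := by module
  exact haP ((P.smul_mem_iff (sub_ne_zero.mpr hl.symm)).mp (this ▸ sub_mem ha h))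

section Candidates

variable [FiniteDimensional F V] {P : Submodule F V} {u : V →ₗ[F] V}

theorem exists_sub_smul_mem_notMem {W : Submodule F V} (hW : finrank F W ≤ finrank F P) (l : F)
    (hw : ∃ w ∈ W, u w - l • w ∉ P) : ∃ a, u a - l • a ∈ P ∧ a ∉ W := by
  by_contra! h
  obtain ⟨w, hwW, hwP⟩ := hw
  have hle : P.comap (u - l • LinearMap.id) ≤ W := fun a ha => h a (by simpa using ha)
  have heq := eq_of_le_of_finrank_le hle (hW.trans (P.finrank_le_finrank_comap _))
  have hwK : w ∈ P.comap (u - l • LinearMap.id) := heq ▸ hwW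
  exact hwP (by simpa using hwK)

theorem exists_linearIndependent_sub_smul_mem (hP : 2 ≤ finrank F P) {x : V} (hx : x ∈ P)
    (hux : u x ∉ P) {l : Fin 3 → F} (hl : Injective l) :
    ∃ a : Fin 3 → V, LinearIndependent F a ∧ ∀ i, u (a i) - l i • a i ∈ P := by
  classical
  obtain ⟨a₁, ha₁, ha₁P⟩ := exists_sub_smul_mem_notMem le_rfl (l 0)
    ⟨x, hx, fun h => hux (by simpa using add_mem h (P.smul_mem (l 0) hx))⟩
  have ha₁l : ∀ i ≠ 0, u a₁ - l i • a₁ ∉ P := fun i hi => sub_smul_notMem ha₁ ha₁P (hl.ne hi.symm)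
  obtain ⟨a₂, ha₂, ha₂₁⟩ := exists_sub_smul_mem_notMem (W := span F {a₁})
    ((finrank_span_le_card _).trans
      (by rw [Set.toFinset_singleton, Finset.card_singleton]; omega)) (l 1)
    ⟨a₁, mem_span_singleton_self a₁, ha₁l 1 (by decide)⟩
  obtain ⟨a₃, ha₃, ha₃₁₂⟩ := exists_sub_smul_mem_notMem (W := span F {a₁, a₂})
    ((finrank_span_le_card _).trans
      (by rw [Set.toFinset_insert, Set.toFinset_singleton]; exact Finset.card_le_two.trans hP))
    (l 2)
    ⟨a₁, subset_span (by simp), ha₁l 2 (by decide)⟩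
  refine ⟨![a₁, a₂, a₃], linearIndependent_three (fun h => ha₁P (h ▸ P.zero_mem)) ha₂₁ ha₃₁₂, ?_⟩
  intro i
  fin_cases i <;> assumption

theorem exists_hasThreeEigenvalues_add_of_forall_finrank_lt (hP : finrank F P = 2) {x : V}
    (hx : x ∈ P) (hux : u x ∉ P) {l : Fin 3 → F} (hl : Injective l)
    (hA : ∀ A ∈ Module.End.invtSubmodule u, P ≤ A → finrank F P + 1 < finrank F A) :
    ∃ w : V →ₗ[F] V, range w ≤ P ∧ trace F V w = 0 ∧ HasThreeEigenvalues (u + w) := by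
  obtain ⟨a, ha, haP⟩ := exists_linearIndependent_sub_smul_mem hP.ge hx hux hl
  have hPa : ¬ P ≤ span F (Set.range a) := by
    intro hPa
    refine (hA _ ?_ hPa).not_ge ((finrank_range_le_card a).trans (by simp [hP]))
    rw [Module.End.mem_invtSubmodule, span_le]
    rintro _ ⟨i, rfl⟩
    have : u (a i) = (u (a i) - l i • a i) + l i • a i := by abel
    rw [SetLike.mem_coe, mem_comap, this]
    exact add_mem (hPa (haP i)) (smul_mem _ _ (subset_span ⟨i, rfl⟩))
  obtain ⟨p, hpP, hpa⟩ := SetLike.not_le_iff_exists.mp hPa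
  obtain ⟨w, hwP, hw0, hwa⟩ := exists_range_le_trace_eq_zero_apply_eq ha
    (b := fun i => l i • a i - u (a i)) (fun i => by simpa using P.neg_mem (haP i)) hpP hpa
  exact ⟨w, hwP, hw0, hasThreeEigenvalues_of_apply_eq hl ha.ne_zero fun i => by simp [hwa]⟩

theorem exists_mem_apply_mem_of_mem_invtSubmodule (hP : 2 ≤ finrank F P) {A : Submodule F V}
    (hAu : A ∈ Module.End.invtSubmodule u) (hPA : P ≤ A) (hA : finrank F A ≤ finrank F P + 1)
    {x : V} (hx : x ∈ P) (hux : u x ∉ P) :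
    ∃ q ∈ P, u q ∈ P ∧ LinearIndependent F ![x, q, u x] ∧ ∃ μ : F, u (u x) - μ • u x ∈ P := by
  have hAu' : ∀ v ∈ A, u v ∈ A := fun v hv => hAu hv
  have hA' : P ⊔ span F {u x} = A :=
    eq_of_le_of_finrank_le (sup_le hPA (span_le.mpr (by simpa using hAu' _ (hPA hx))))
      (by rwa [finrank_sup_span_singleton hux])
  have hmem : ∀ v ∈ A, ∃ c : F, v - c • u x ∈ P := by
    intro v hv
    rw [← hA', mem_sup] at hv
    obtain ⟨p, hp, _, hc, rfl⟩ := hv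
    obtain ⟨c, rfl⟩ := mem_span_singleton.mp hc
    exact ⟨c, by simpa using hp⟩
  obtain ⟨y, hyP, hyx⟩ := exists_mem_notMem_span_singleton hP x
  obtain ⟨t, ht⟩ := hmem _ (hAu' _ (hPA hyP))
  obtain ⟨μ, hμ⟩ := hmem _ (hAu' _ (hAu' _ (hPA hx)))
  refine ⟨y - t • x, sub_mem hyP (P.smul_mem t hx), by simpa using ht,
    linearIndependent_of_mem_of_notMem hx (sub_mem hyP (P.smul_mem t hx)) ?_ ?_ hux, μ, hμ⟩
  · rintro rfl
    exact hux (by simp)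
  · intro h
    exact hyx (by simpa using add_mem h (smul_mem _ t (mem_span_singleton_self x)))

theorem exists_hasThreeEigenvalues_add_of_sub_smul_mem
    (hsum : ∀ τ : F, ∃ l : Fin 3 → F, Injective l ∧ l 0 + l 1 + l 2 = τ)
    {x q : V} (hx : x ∈ P) (hq : q ∈ P) (huq : u q ∈ P) (hli : LinearIndependent F ![x, q, u x])
    {μ : F} (hμ : u (u x) - μ • u x ∈ P) :
    ∃ w : V →ₗ[F] V, range w ≤ P ∧ trace F V w = 0 ∧ HasThreeEigenvalues (u + w) := by
  obtain ⟨g₀, g₁, g₂, hg⟩ := hli.exists_dual_three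
  set z := u x
  set r := u z - μ • z
  -- `μ + g₁ (u q) + g₂ r` is the trace of `u` on `span {x, q, z}`, which is `u`-invariant.
  obtain ⟨l, hl, hlτ⟩ := hsum (μ + g₁ (u q) + g₂ r)
  set w := g₀.smulRight ((l 0 + l 1 - μ) • x) + g₁.smulRight (l 2 • q - u q) +
    g₂.smulRight (-((l 0 - μ) * (l 1 - μ)) • x - r)
  have hwx : w x = (l 0 + l 1 - μ) • x := by simp [w, hg]
  have hwq : w q = l 2 • q - u q := by simp [w, hg]
  have hwz : w z = -((l 0 - μ) * (l 1 - μ)) • x - r := by simp [w, hg]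
  have htr : trace F V w = l 0 + l 1 + l 2 - (μ + g₁ (u q) + g₂ r) := by
    simp only [w, map_add, map_sub, map_smul, trace_smulRight, hg, smul_eq_mul]
    ring
  have heig : ∀ c, (c - l 0) * (c - l 1) = 0 →
      (u + w) ((c - μ) • x + z) = c • ((c - μ) • x + z) := by
    intro c hc
    simp only [LinearMap.add_apply, map_add, map_smul, hwx, hwz, r]
    linear_combination (norm := module) -(hc • x)
  refine ⟨w, ?_, by rw [htr, hlτ, sub_self],
    hasThreeEigenvalues_of_apply_eq hl (a := ![(l 0 - μ) • x + z, (l 1 - μ) • x + z, q]) ?_ ?_⟩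
  · rintro _ ⟨v, rfl⟩
    simp only [w, LinearMap.add_apply, smulRight_apply]
    exact add_mem (add_mem (smul_mem _ _ (smul_mem _ _ hx))
      (smul_mem _ _ (sub_mem (smul_mem _ _ hq) huq)))
      (smul_mem _ _ (sub_mem (smul_mem _ _ hx) hμ))
  · intro i h
    fin_cases i
    · simpa [hg] using congr_arg g₂ h
    · simpa [hg] using congr_arg g₂ h
    · exact hli.ne_zero 1 h
  · intro i
    fin_cases i
    · exact heig _ (by ring)
    · exact heig _ (by ring)
    · simp [hwq]

theorem exists_hasThreeEigenvalues_add (hP : finrank F P = 2)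
    (hsum : ∀ τ : F, ∃ l : Fin 3 → F, Injective l ∧ l 0 + l 1 + l 2 = τ) {x : V} (hx : x ∈ P)
    (hux : u x ∉ P) :
    ∃ w : V →ₗ[F] V, range w ≤ P ∧ trace F V w = 0 ∧ HasThreeEigenvalues (u + w) := by
  by_cases hA : ∃ A ∈ Module.End.invtSubmodule u, P ≤ A ∧ finrank F A ≤ finrank F P + 1
  · obtain ⟨A, hAu, hPA, hA⟩ := hA
    obtain ⟨q, hqP, huq, hli, μ, hμ⟩ :=
      exists_mem_apply_mem_of_mem_invtSubmodule hP.ge hAu hPA hA hx hux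
    exact exists_hasThreeEigenvalues_add_of_sub_smul_mem hsum hx hqP huq hli hμ
  · push Not at hA
    obtain ⟨l, hl, -⟩ := hsum 0
    exact exists_hasThreeEigenvalues_add_of_forall_finrank_lt hP hx hux hl hA

end Candidates

end

theorem stmt14_general {F V : Type*} [Field F] [AddCommGroup V] [Module F V]
    [FiniteDimensional F V] (hF : 2 < Cardinal.mk F)
    (P : Submodule F V) (hP : Module.finrank F P = 2)
    (S : Submodule F (V →ₗ[F] V))
    (hspec : ∀ u ∈ S, ∃ a b : F, ∀ c : F, Module.End.HasEigenvalue u c → c = a ∨ c = b)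
    (hall : ∀ (φ : V →ₗ[F] F), ∀ x ∈ P, φ x = 0 → φ.smulRight x ∈ S) :
    ∀ u ∈ S, ∀ x ∈ P, u x ∈ P := by
  intro u hu x hx
  by_contra hux
  have hT : ∀ w : V →ₗ[F] V, range w ≤ P → trace F V w = 0 → w ∈ S :=
    fun _ => mem_of_range_le_of_trace_eq_zero hall
  by_cases h2 : (2 : F) = 0
  · have h3 : (3 : F) ≠ 0 := fun h3 => one_ne_zero (by linear_combination h3 - h2)
    obtain ⟨w, hwP, hw0, hw⟩ :=
      exists_hasThreeEigenvalues_add hP (exists_injective_add_add_eq h3 hF) hx hux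
    exact not_hasThreeEigenvalues (hspec _ (add_mem hu (hT w hwP hw0))) hw
  · obtain ⟨y, hyP, hyx⟩ := exists_mem_notMem_span_singleton hP.ge x
    have hx0 : x ≠ 0 := by
      rintro rfl
      exact hux (by simp)
    obtain ⟨w, hwP, hw0, hw⟩ :=
      exists_range_le_trace_eq_zero_hasThreeEigenvalues_of_two_ne_zero h2 hx hyP
        (linearIndependent_of_mem_of_notMem hx hyP hx0 hyx hux)
    exact not_hasThreeEigenvalues (hspec _ (hT w hwP hw0)) hw

/-- Splitting Lemma for Hurdles, dual version: let V be n-dimensional with n ≥ 3 over a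
field with more than 2 elements, P a 2-dimensional subspace of V, and S ⊆ End(V) a
subspace all of whose elements have at most 2 distinct eigenvalues in F. If S contains
φ ⊗ x for every linear form φ and every x ∈ P with φ(x) = 0, then P is invariant under
every element of S. -/
theorem stmt14 {F V : Type*} [Field F] [AddCommGroup V] [Module F V]
    [FiniteDimensional F V] {n : ℕ} (hn : 3 ≤ n) (hV : Module.finrank F V = n)
    (hF : 2 < Cardinal.mk F)
    (P : Submodule F V) (hP : Module.finrank F P = 2)
    (S : Submodule F (V →ₗ[F] V))
    (hspec : ∀ u ∈ S, ∃ a b : F, ∀ c : F, Module.End.HasEigenvalue u c → c = a ∨ c = b)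
    (hall : ∀ (φ : V →ₗ[F] F), ∀ x ∈ P, φ x = 0 → φ.smulRight x ∈ S) :
    ∀ u ∈ S, ∀ x ∈ P, u x ∈ P :=
  stmt14_general hF P hP S hspec hall
end

section
/- Let F be a field with |F| > 2, n ≥ 3, V an n-dimensional vector space over F, G a codimension-2 subspace of V, and S a linear subspace of End(V) such that every element of S has at most 2 distinct eigenvalues in F. Assume that S contains every trace-zero endomorphism u of V with G ⊆ ker u. Then: (a) every u ∈ S leaves G invariant; (b) for every u ∈ S, the induced endomorphism u_G of G has at most one eigenvalue in F; (c) if the endomorphism of V/G induced by u has nonzero trace, then u_G has no eigenvalue in F; (d) if u_G = 0 then the induced endomorphism of V/G has trace zero. -/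
/-!
Adding to `u ∈ S` any trace-zero map vanishing on `G` keeps it in `S`, so `u` may be redefined
freely on lifts `e₀, e₁` of a basis of `V ⧸ G`, as long as the trace of the induced map on
`V ⧸ G` is preserved, without changing it on `G`. Doing this to `0` with `e₀ ↦ e₀, e₁ ↦ -e₁`
gives eigenvalues `1, -1` and `0` (on `G ≠ 0`), so `F` has characteristic 2.

If `x ∈ G` but `u x ∉ G`, take `e₀ = u x`: then `x, e₀` can be made to span a companion block with
two prescribed eigenvalues and `e₁` an eigenvector for a third. The only constraint is that the
three sum to a given trace, and in characteristic 2 with `|F| > 2` three distinct such values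
exist. Once `G` is invariant, the modification `e₀ ↦ ν e₀, e₁ ↦ (τ - ν) e₁` (`τ` the trace on
`V ⧸ G`) adds the eigenvalues `ν, τ - ν` to those of `u_G`; choosing `ν` away from the others
yields a third eigenvalue, which gives (b) and (c), and (d) is (c) for the eigenvalue `0` of
`u_G = 0`.
-/

open Module LinearMap

theorem exists_ne_ne_of_two_lt_mk {α : Type*} (h : 2 < Cardinal.mk α) (a b : α) :
    ∃ c, c ≠ a ∧ c ≠ b :=
  Cardinal.exists_ne_ne_of_three_le (by exact_mod_cast Cardinal.natCast_add_one_le_iff.2 h) a b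

theorem exists_three_ne_add_eq {F : Type*} [Field F] (h2 : (2 : F) = 0)
    (hF : 2 < Cardinal.mk F) (σ : F) : ∃ a b c : F, a ≠ b ∧ a ≠ c ∧ b ≠ c ∧ a + b + c = σ := by
  obtain ⟨t, ht0, ht1⟩ := exists_ne_ne_of_two_lt_mk hF 0 1
  refine ⟨σ + 1, σ + t, σ + 1 + t, ?_, ?_, ?_, by linear_combination (σ + 1 + t) * h2⟩
  · exact fun h => ht1 (add_left_cancel h).symm
  · exact fun h => ht0 (by linear_combination -h)
  · exact fun h => one_ne_zero (by linear_combination -h)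

section

variable {F V : Type*} [Field F] [AddCommGroup V] [Module F V]

def AtMostTwoEigenvalues (u : End F V) : Prop :=
  ∃ a b : F, ∀ c : F, u.HasEigenvalue c → c = a ∨ c = b

theorem AtMostTwoEigenvalues.eq_or_eq {u : End F V} (hu : AtMostTwoEigenvalues u)
    {l₁ l₂ l : F} (h12 : l₁ ≠ l₂) (h₁ : u.HasEigenvalue l₁) (h₂ : u.HasEigenvalue l₂)
    (h : u.HasEigenvalue l) : l = l₁ ∨ l = l₂ := by
  obtain ⟨a, b, hab⟩ := hu
  rcases hab _ h₁ with rfl | rfl <;> rcases hab _ h₂ with rfl | rfl <;>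
    rcases hab _ h with rfl | rfl <;> simp_all

theorem hasEigenvalue_of_apply_eq_smul {u : End F V} {v : V} {l : F} (hv : v ≠ 0)
    (h : u v = l • v) : u.HasEigenvalue l :=
  Module.End.hasEigenvalue_of_hasEigenvector ⟨Module.End.mem_eigenspace_iff.2 h, hv⟩

/-- `x, y` span a companion block of `(X - a) (X - b)`, with `a`-eigenvector `y - b • x`. -/
theorem hasEigenvalue_of_companion {u : End F V} {x y : V} {a b : F} (hx : u x = y)
    (hy : u y = (a + b) • y - (a * b) • x) (hne : y - b • x ≠ 0) : u.HasEigenvalue a := by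
  refine hasEigenvalue_of_apply_eq_smul hne ?_
  rw [map_sub, map_smul, hx, hy]
  module

variable {G : Submodule F V}

theorem Module.End.HasEigenvalue.of_restrict {u u' : End F V} (hinv : ∀ x ∈ G, u x ∈ G)
    (heq : ∀ x ∈ G, u' x = u x) {l : F} (h : Module.End.HasEigenvalue (u.restrict hinv) l) :
    u'.HasEigenvalue l := by
  obtain ⟨⟨x, hxG⟩, hx⟩ := h.exists_hasEigenvector
  refine hasEigenvalue_of_apply_eq_smul (by simpa using hx.2) ?_
  rw [heq x hxG]
  simpa using congrArg Subtype.val hx.apply_eq_smul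

theorem ne_zero_of_mkQ_eq_basis {ι : Type*} (b : Basis ι F (V ⧸ G)) {v : V} {i : ι}
    (h : G.mkQ v = b i) : v ≠ 0 :=
  fun hv => b.ne_zero i (by rw [← h, hv, map_zero])

theorem exists_basis_quotient_lift_of_notMem (hG : finrank F (V ⧸ G) = 2) {v : V} (hv : v ∉ G) :
    ∃ (b : Basis (Fin 2) F (V ⧸ G)) (e : Fin 2 → V), (∀ i, G.mkQ (e i) = b i) ∧ e 0 = v := by
  have : FiniteDimensional F (V ⧸ G) := Module.finite_of_finrank_eq_succ (R := F) hG
  have hq : G.mkQ v ≠ 0 := by simpa [Submodule.Quotient.mk_eq_zero] using hv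
  obtain ⟨r, hr⟩ : ∃ r, r ∉ Submodule.span F {G.mkQ v} := by
    by_contra! h
    have := finrank_span_singleton (K := F) hq
    rw [Submodule.eq_top_iff'.2 h, finrank_top, hG] at this
    exact absurd this (by norm_num)
  obtain ⟨s, rfl⟩ := G.mkQ_surjective r
  have hli : LinearIndependent F ![G.mkQ v, G.mkQ s] := (LinearIndependent.pair_iff' hq).2
    fun a h => hr (h ▸ Submodule.smul_mem _ a (Submodule.mem_span_singleton_self _))
  refine ⟨basisOfLinearIndependentOfCardEqFinrank hli (by simp [hG]), ![v, s], fun i => ?_, rfl⟩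
  fin_cases i <;> simp

theorem trace_mapQ_eq_sum_coord [FiniteDimensional F V] {ι : Type*} [Fintype ι]
    (b : Basis ι F (V ⧸ G)) {e : ι → V} (he : ∀ i, G.mkQ (e i) = b i) (u : End F V)
    (h : G ≤ G.comap u) :
    trace F (V ⧸ G) (G.mapQ G u h) = ∑ i, b.coord i (G.mkQ (u (e i))) := by
  classical
  rw [trace_eq_matrix_trace F b, Matrix.trace]
  simp [LinearMap.toMatrix_apply, ← he]

def ContainsTraceZeroVanishingOn (S : Submodule F (End F V)) (G : Submodule F V) : Prop :=
  ∀ u : End F V, trace F V u = 0 → (∀ x ∈ G, u x = 0) → u ∈ S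

namespace ContainsTraceZeroVanishingOn

variable [FiniteDimensional F V] {S : Submodule F (End F V)}

theorem exists_eqOn_of_sum_coord_eq (hS : ContainsTraceZeroVanishingOn S G) {u : End F V}
    (hu : u ∈ S) {ι : Type*} [Fintype ι] (b : Basis ι F (V ⧸ G)) {e : ι → V}
    (he : ∀ i, G.mkQ (e i) = b i) (w : ι → V)
    (hw : ∑ i, b.coord i (G.mkQ (w i)) = ∑ i, b.coord i (G.mkQ (u (e i)))) :
    ∃ u' ∈ S, (∀ x ∈ G, u' x = u x) ∧ ∀ i, u' (e i) = w i := by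
  classical
  simp only [Submodule.mkQ_apply] at he hw
  set D : End F V := ∑ i, ((b.coord i).comp G.mkQ).smulRight (w i - u (e i))
  have hD : D ∈ S := by
    refine hS D ?_ fun x hx => ?_
    · simp only [D, map_sum, trace_smulRight, comp_apply, Submodule.mkQ_apply, map_sub,
        Finset.sum_sub_distrib, hw, sub_self]
    · simp [D, (Submodule.Quotient.mk_eq_zero G).2 hx]
  refine ⟨u + D, S.add_mem hu hD, fun x hx => ?_, fun j => ?_⟩
  · simp [D, (Submodule.Quotient.mk_eq_zero G).2 hx]
  · simp [D, he, Finsupp.single_apply]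

theorem exists_eqOn_hasEigenvalue (hS : ContainsTraceZeroVanishingOn S G)
    (hG : finrank F (V ⧸ G) = 2) {u : End F V} (hu : u ∈ S) (hinv : ∀ x ∈ G, u x ∈ G) (ν : F) :
    ∃ u' ∈ S, (∀ x ∈ G, u' x = u x) ∧ u'.HasEigenvalue ν ∧
      u'.HasEigenvalue (trace F (V ⧸ G) (G.mapQ G u hinv) - ν) := by
  set τ := trace F (V ⧸ G) (G.mapQ G u hinv)
  set b := finBasisOfFinrankEq F (V ⧸ G) hG
  set e : Fin 2 → V := fun i => Function.surjInv G.mkQ_surjective (b i)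
  have he : ∀ i, Submodule.Quotient.mk (e i) = b i := fun i => Function.surjInv_eq _ _
  obtain ⟨u', hu'S, hu'G, hu'e⟩ := hS.exists_eqOn_of_sum_coord_eq hu b he
    ![ν • e 0, (τ - ν) • e 1] (by rw [← trace_mapQ_eq_sum_coord b he u hinv]; simp [τ, he])
  exact ⟨u', hu'S, hu'G,
    hasEigenvalue_of_apply_eq_smul (ne_zero_of_mkQ_eq_basis b (he 0)) (hu'e 0),
    hasEigenvalue_of_apply_eq_smul (ne_zero_of_mkQ_eq_basis b (he 1)) (hu'e 1)⟩

theorem two_eq_zero (hS : ContainsTraceZeroVanishingOn S G) (hG : finrank F (V ⧸ G) = 2)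
    (hGne : G ≠ ⊥) (hspec : ∀ u ∈ S, AtMostTwoEigenvalues u) : (2 : F) = 0 := by
  by_contra h2
  have hinv : ∀ x ∈ G, (0 : End F V) x ∈ G := fun x _ => by simp
  obtain ⟨u', hu'S, hu'G, h₁, hneg⟩ := hS.exists_eqOn_hasEigenvalue hG S.zero_mem hinv 1
  rw [Submodule.mapQ_zero, map_zero, zero_sub] at hneg
  obtain ⟨g, hg, hg0⟩ := Submodule.exists_mem_ne_zero_of_ne_bot hGne
  have h₀ : u'.HasEigenvalue 0 := hasEigenvalue_of_apply_eq_smul hg0 (by simp [hu'G g hg])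
  have h1 : (1 : F) ≠ -1 := fun h => h2 (by linear_combination h)
  rcases (hspec u' hu'S).eq_or_eq h1 h₁ hneg h₀ with h | h
  · exact zero_ne_one h
  · exact zero_ne_one (by linear_combination -h)

theorem apply_mem (hS : ContainsTraceZeroVanishingOn S G) (h2 : (2 : F) = 0)
    (hF : 2 < Cardinal.mk F) (hG : finrank F (V ⧸ G) = 2)
    (hspec : ∀ u ∈ S, AtMostTwoEigenvalues u) {u : End F V} (hu : u ∈ S) {x : V} (hx : x ∈ G) :
    u x ∈ G := by
  by_contra hux
  obtain ⟨b, e, he, he0⟩ := exists_basis_quotient_lift_of_notMem hG hux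
  obtain ⟨l₁, l₂, l₃, h12, h13, h23, hsum⟩ :=
    exists_three_ne_add_eq h2 hF (∑ i, b.coord i (G.mkQ (u (e i))))
  have hxq : Submodule.Quotient.mk x = (0 : V ⧸ G) := (Submodule.Quotient.mk_eq_zero G).2 hx
  simp only [Submodule.mkQ_apply] at he
  obtain ⟨u', hu'S, hu'G, hu'e⟩ := hS.exists_eqOn_of_sum_coord_eq hu b he
    ![(l₁ + l₂) • e 0 - (l₁ * l₂) • x, l₃ • e 1] (by rw [← hsum]; simp [he, hxq])
  have hx' : u' x = e 0 := (hu'G x hx).trans he0.symm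
  have hne (l : F) : e 0 - l • x ≠ 0 := ne_zero_of_mkQ_eq_basis b (i := 0) (by simp [he, hxq])
  have h₁ := hasEigenvalue_of_companion hx' (hu'e 0) (hne l₂)
  have h₂ := hasEigenvalue_of_companion (a := l₂) hx'
    (by simp only [hu'e, Matrix.cons_val_zero]; module) (hne l₁)
  have h₃ := hasEigenvalue_of_apply_eq_smul (ne_zero_of_mkQ_eq_basis b (he 1)) (hu'e 1)
  rcases (hspec u' hu'S).eq_or_eq h12 h₁ h₂ h₃ with h | h
  exacts [h13 h.symm, h23 h.symm]

theorem subsingleton_eigenvalues_restrict (hS : ContainsTraceZeroVanishingOn S G)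
    (hF : 2 < Cardinal.mk F) (hG : finrank F (V ⧸ G) = 2)
    (hspec : ∀ u ∈ S, AtMostTwoEigenvalues u) {u : End F V} (hu : u ∈ S)
    (hinv : ∀ x ∈ G, u x ∈ G) :
    {a : F | Module.End.HasEigenvalue (u.restrict hinv) a}.Subsingleton := by
  intro l hl m hm
  by_contra hlm
  obtain ⟨ν, hνl, hνm⟩ := exists_ne_ne_of_two_lt_mk hF l m
  obtain ⟨u', hu'S, hu'G, hν, -⟩ := hS.exists_eqOn_hasEigenvalue hG hu hinv ν
  rcases (hspec u' hu'S).eq_or_eq hlm (hl.of_restrict hinv hu'G) (hm.of_restrict hinv hu'G) hν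
    with h | h
  exacts [hνl h, hνm h]

theorem not_hasEigenvalue_restrict (hS : ContainsTraceZeroVanishingOn S G) (h2 : (2 : F) = 0)
    (hF : 2 < Cardinal.mk F) (hG : finrank F (V ⧸ G) = 2)
    (hspec : ∀ u ∈ S, AtMostTwoEigenvalues u) {u : End F V} (hu : u ∈ S)
    (hinv : ∀ x ∈ G, u x ∈ G) (hτ : trace F (V ⧸ G) (G.mapQ G u hinv) ≠ 0) (l : F) :
    ¬ Module.End.HasEigenvalue (u.restrict hinv) l := by
  intro hl
  set τ := trace F (V ⧸ G) (G.mapQ G u hinv)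
  obtain ⟨ν, hνl, hντ⟩ := exists_ne_ne_of_two_lt_mk hF l (τ - l)
  obtain ⟨u', hu'S, hu'G, hν, hτν⟩ := hS.exists_eqOn_hasEigenvalue hG hu hinv ν
  have hne : ν ≠ τ - ν := fun h => hτ (by linear_combination -h + ν * h2)
  rcases (hspec u' hu'S).eq_or_eq hne hν hτν (hl.of_restrict hinv hu'G) with h | h
  · exact hνl h.symm
  · exact hντ (by linear_combination h)

end ContainsTraceZeroVanishingOn

end

/-- Splitting Lemma for Hurdles: V is n-dimensional (n ≥ 3) over a field with more than
2 elements, G a codimension-2 subspace, and S ⊆ End(V) a subspace all of whose elements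
have at most 2 distinct eigenvalues in F, containing every trace-zero endomorphism
vanishing on G. Then every u ∈ S leaves G invariant, the restriction u_G has at most
one eigenvalue in F, u_G has no eigenvalue in F when the induced map on V/G has
nonzero trace, and the induced map on V/G has trace zero whenever u_G = 0. -/
theorem stmt15 {F V : Type*} [Field F] [AddCommGroup V] [Module F V]
    [FiniteDimensional F V] {n : ℕ} (hn : 3 ≤ n) (hV : Module.finrank F V = n)
    (hF : 2 < Cardinal.mk F)
    (G : Submodule F V) (hG : Module.finrank F (V ⧸ G) = 2)
    (S : Submodule F (V →ₗ[F] V))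
    (hspec : ∀ u ∈ S, ∃ a b : F, ∀ c : F, Module.End.HasEigenvalue u c → c = a ∨ c = b)
    (hcontain : ∀ u : V →ₗ[F] V, LinearMap.trace F V u = 0 →
      (∀ x ∈ G, u x = 0) → u ∈ S) :
    ∀ u ∈ S, ∃ hinv : ∀ x ∈ G, u x ∈ G,
      {a : F | Module.End.HasEigenvalue (LinearMap.restrict u hinv) a}.Subsingleton ∧
      (LinearMap.trace F (V ⧸ G)
          (Submodule.mapQ G G u (fun x hx => Submodule.mem_comap.mpr (hinv x hx))) ≠ 0 →
        ∀ a : F, ¬ Module.End.HasEigenvalue (LinearMap.restrict u hinv) a) ∧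
      (LinearMap.restrict u hinv = 0 →
        LinearMap.trace F (V ⧸ G)
          (Submodule.mapQ G G u (fun x hx => Submodule.mem_comap.mpr (hinv x hx))) = 0) := by
  intro u hu
  have hS : ContainsTraceZeroVanishingOn S G := hcontain
  have hGne : G ≠ ⊥ := by
    intro h
    have := G.finrank_quotient_add_finrank
    rw [hG, h, finrank_bot, hV] at this
    omega
  have h2 := hS.two_eq_zero hG hGne hspec
  have hinv : ∀ x ∈ G, u x ∈ G := fun x hx => hS.apply_mem h2 hF hG hspec hu hx
  have hc := hS.not_hasEigenvalue_restrict h2 hF hG hspec hu hinv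
  refine ⟨hinv, hS.subsingleton_eigenvalues_restrict hF hG hspec hu hinv, hc, fun h0 => ?_⟩
  by_contra hτ
  obtain ⟨g, hg, hg0⟩ := Submodule.exists_mem_ne_zero_of_ne_bot hGne
  exact hc hτ 0 (hasEigenvalue_of_apply_eq_smul (v := ⟨g, hg⟩) (by simpa using hg0) (by simp [h0]))
end
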